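/- arXiv:1310.4714 — 6 statements merged into one kernel-verified Lean document; each statement's English description precedes it below -/
import Mathlib

section
/- Let T be a closed nondegenerate triangle in the plane ℝ² and let F₁, F₂, F₃ be three nonempty finite families of translates of T. Suppose that K' ∩ K'' ≠ ∅ for every pair (K', K'') with K' ∈ F_i, K'' ∈ F_j and i ≠ j. Then there exists m ∈ {1,2,3} such that the family F_m can be pierced by at most three points, i.e., there is a set S ⊆ ℝ² with |S| ≤ 3 meeting every member of F_m. -/
open Pointwise

lemma dolnikov_schemeG (m0 m1 m2 M0 M1 M2 : ℝ)
    (h : 2*(M0 - m0) + (M1 - m1) + (M2 - m2) ≤ 4) :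
    ∃ a0 a1 a2 b0 b1 b2 c0 c1 c2 : ℝ,
      a0 + a1 + a2 = 1 ∧ b0 + b1 + b2 = 1 ∧ c0 + c1 + c2 = 1 ∧
      ∀ x0 x1 x2 : ℝ, x0 + x1 + x2 = 0 →
        m0 ≤ x0 → x0 ≤ M0 → m1 ≤ x1 → x1 ≤ M1 → m2 ≤ x2 → x2 ≤ M2 →
        (x0 ≤ a0 ∧ x1 ≤ a1 ∧ x2 ≤ a2) ∨ (x0 ≤ b0 ∧ x1 ≤ b1 ∧ x2 ≤ b2) ∨
        (x0 ≤ c0 ∧ x1 ≤ c1 ∧ x2 ≤ c2) := by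
  set σ : ℝ := M0 + M1 + M2 with hs
  set w0 : ℝ := M0 - m0 with hw0
  set w1 : ℝ := M1 - m1 with hw1
  set w2 : ℝ := M2 - m2 with hw2
  set y3 : ℝ := (σ + 1 - w0 - w1)/2 with hy3
  set y2 : ℝ := σ - 1 - y3 with hy2
  set α : ℝ := σ - y3 - w1 with hα
  set β : ℝ := σ - y3 - w0 with hβ
  set α' : ℝ := σ - y2 - w2 with hα'
  set β' : ℝ := σ - y2 - w0 with hβ'
  refine ⟨M0, M1 - y2, M2 - y3, M0 - α, M1 - β, M2,
      M0 - α', M1 + α' + β' - σ + 1, M2 - β',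
      by linarith, by linarith, by linarith, ?_⟩
  intro x0 x1 x2 hsum h0l h0u h1l h1u h2l h2u
  by_cases hc2 : x2 ≤ M2 - y3
  · by_cases hc1 : x1 ≤ M1 - y2
    · exact Or.inl ⟨h0u, hc1, hc2⟩
    · push_neg at hc1
      exact Or.inr (Or.inr ⟨by linarith, by linarith, by linarith⟩)
  · push_neg at hc2
    exact Or.inr (Or.inl ⟨by linarith, by linarith, h2u⟩)

/-- Dol'nikov's problem for triangles: given three nonempty finite families of
translates of a closed nondegenerate triangle `T` in the plane, such that any
two translates from different families intersect, one of the families can be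
pierced by at most three points. -/
theorem dolnikov_triangles
    (v : Fin 3 → EuclideanSpace ℝ (Fin 2))
    (hv : AffineIndependent ℝ v)
    (T : Set (EuclideanSpace ℝ (Fin 2)))
    (hT : T = convexHull ℝ (Set.range v))
    (F : Fin 3 → Finset (Set (EuclideanSpace ℝ (Fin 2))))
    (hFne : ∀ i, (F i).Nonempty)
    (hFtr : ∀ i, ∀ A ∈ F i, ∃ t : EuclideanSpace ℝ (Fin 2), A = T + {t})
    (hint : ∀ i j, i ≠ j → ∀ A ∈ F i, ∀ B ∈ F j, (A ∩ B).Nonempty) :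
    ∃ m : Fin 3, ∃ S : Finset (EuclideanSpace ℝ (Fin 2)), S.card ≤ 3 ∧
      ∀ A ∈ F m, ∃ p ∈ S, p ∈ A := by
  classical
  have htop : affineSpan ℝ (Set.range v) = ⊤ := by
    rw [hv.affineSpan_eq_top_iff_card_eq_finrank_add_one]
    simp [finrank_euclideanSpace_fin]
  let b : AffineBasis (Fin 3) ℝ (EuclideanSpace ℝ (Fin 2)) := ⟨v, hv, htop⟩
  have hmemT : ∀ x : EuclideanSpace ℝ (Fin 2), x ∈ T ↔ ∀ k, 0 ≤ b.coord k x := by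
    intro x
    rw [hT, show Set.range v = Set.range b from rfl, b.convexHull_eq_nonneg_coord]
    exact Iff.rfl
  -- the linear functionals
  let lin : Fin 3 → EuclideanSpace ℝ (Fin 2) → ℝ := fun k t => (b.coord k).linear t
  have hcoord_sub : ∀ (k : Fin 3) (x t : EuclideanSpace ℝ (Fin 2)), b.coord k (x - t) = b.coord k x - lin k t := by
    intro k x t
    have hx : x = t +ᵥ (x - t) := by
      simp [vadd_eq_add]
    conv_rhs => rw [hx]
    rw [AffineMap.map_vadd]
    simp [lin, vadd_eq_add]
  have hmem_translate : ∀ (t x : EuclideanSpace ℝ (Fin 2)), x ∈ T + {t} ↔ ∀ k, lin k t ≤ b.coord k x := by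
    intro t x
    rw [Set.add_singleton]
    constructor
    · rintro ⟨y, hy, rfl⟩ k
      have := (hmemT y).1 hy k
      have hxy : b.coord k ((y + t) - t) = b.coord k (y + t) - lin k t := hcoord_sub k _ t
      simp only [add_sub_cancel_right] at hxy
      linarith
    · intro hk
      refine ⟨x - t, (hmemT _).2 fun k => ?_, sub_add_cancel x t⟩
      rw [hcoord_sub]
      linarith [hk k]
  have hsumcoord : ∀ x : EuclideanSpace ℝ (Fin 2), b.coord 0 x + b.coord 1 x + b.coord 2 x = 1 := by
    intro x
    have := b.sum_coord_apply_eq_one x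
    rwa [Fin.sum_univ_three] at this
  have hsumlin : ∀ t : EuclideanSpace ℝ (Fin 2), lin 0 t + lin 1 t + lin 2 t = 0 := by
    intro t
    have h1 := hsumcoord (v 0)
    have h2 := hsumcoord (v 0 - t)
    have e0 := hcoord_sub 0 (v 0) t
    have e1 := hcoord_sub 1 (v 0) t
    have e2 := hcoord_sub 2 (v 0) t
    linarith
  -- piercing points from weights
  let pt : (Fin 3 → ℝ) → EuclideanSpace ℝ (Fin 2) := fun a => Finset.univ.affineCombination ℝ v a
  have hpt_coord : ∀ (a : Fin 3 → ℝ), a 0 + a 1 + a 2 = 1 → ∀ k, b.coord k (pt a) = a k := by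
    intro a ha k
    have hsum : (Finset.univ : Finset (Fin 3)).sum a = 1 := by
      rw [Fin.sum_univ_three]; exact ha
    exact b.coord_apply_combination_of_mem (Finset.mem_univ k) hsum
  have hpt_mem : ∀ (a : Fin 3 → ℝ) (t : EuclideanSpace ℝ (Fin 2)), a 0 + a 1 + a 2 = 1 →
      (∀ k, lin k t ≤ a k) → pt a ∈ T + {t} := by
    intro a t ha hk
    rw [hmem_translate]
    intro k
    rw [hpt_coord a ha k]
    exact hk k
  -- cross inequalities
  have hcross : ∀ (s t : EuclideanSpace ℝ (Fin 2)), ((T + {s}) ∩ (T + {t})).Nonempty →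
      (lin 0 s - lin 0 t ≤ 1) ∧ (lin 1 s - lin 1 t ≤ 1) ∧ (lin 2 s - lin 2 t ≤ 1) := by
    rintro s t ⟨z, hzs, hzt⟩
    rw [hmem_translate] at hzs hzt
    have hz := hsumcoord z
    have hs0 := hzs 0; have hs1 := hzs 1; have hs2 := hzs 2
    have ht0 := hzt 0; have ht1 := hzt 1; have ht2 := hzt 2
    have hlt := hsumlin t
    exact ⟨by linarith, by linarith, by linarith⟩
  -- translation vectors for each family member
  choose τ hτ using hFtr
  let Ti : Fin 3 → Finset (EuclideanSpace ℝ (Fin 2)) :=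
    fun i => (F i).attach.image (fun A => τ i A.1 A.2)
  have hTne : ∀ i, (Ti i).Nonempty := by
    intro i
    exact (Finset.attach_nonempty_iff.mpr (hFne i)).image _
  have hTmem : ∀ i t, t ∈ Ti i → T + {t} ∈ F i := by
    intro i t ht
    simp only [Ti, Finset.mem_image] at ht
    obtain ⟨A, -, rfl⟩ := ht
    have := hτ i A.1 A.2
    rw [← this]
    exact A.2
  have hτTi : ∀ i A (hA : A ∈ F i), τ i A hA ∈ Ti i := by
    intro i A hA
    exact Finset.mem_image_of_mem _ (Finset.mem_attach _ ⟨A, hA⟩)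
  -- max and min of each coordinate over each family
  let Mx : Fin 3 → Fin 3 → ℝ := fun i k => ((Ti i).image (lin k)).max' ((hTne i).image _)
  let mx : Fin 3 → Fin 3 → ℝ := fun i k => ((Ti i).image (lin k)).min' ((hTne i).image _)
  have hub : ∀ i k t, t ∈ Ti i → lin k t ≤ Mx i k := by
    intro i k t ht
    exact Finset.le_max' _ _ (Finset.mem_image_of_mem _ ht)
  have hlb : ∀ i k t, t ∈ Ti i → mx i k ≤ lin k t := by
    intro i k t ht
    exact Finset.min'_le _ _ (Finset.mem_image_of_mem _ ht)
  have hattM : ∀ i k, ∃ t ∈ Ti i, lin k t = Mx i k := by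
    intro i k
    have := Finset.max'_mem _ (((hTne i)).image (lin k) : ((Ti i).image (lin k)).Nonempty)
    rw [Finset.mem_image] at this
    obtain ⟨t, ht, hteq⟩ := this
    exact ⟨t, ht, hteq⟩
  have hattm : ∀ i k, ∃ t ∈ Ti i, lin k t = mx i k := by
    intro i k
    have := Finset.min'_mem _ (((hTne i)).image (lin k) : ((Ti i).image (lin k)).Nonempty)
    rw [Finset.mem_image] at this
    obtain ⟨t, ht, hteq⟩ := this
    exact ⟨t, ht, hteq⟩
  -- cross bound between families
  have hMm : ∀ (i j : Fin 3), i ≠ j → ∀ k, Mx i k - mx j k ≤ 1 := by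
    intro i j hij k
    obtain ⟨t, ht, htk⟩ := hattM i k
    obtain ⟨s, hs, hsk⟩ := hattm j k
    have hne := hint i j hij _ (hTmem i t ht) _ (hTmem j s hs)
    have h3 := hcross t s hne
    have hk : lin k t - lin k s ≤ 1 := by
      fin_cases k
      · exact h3.1
      · exact h3.2.1
      · exact h3.2.2
    linarith
  -- widths
  set wv : Fin 3 → Fin 3 → ℝ := fun i k => Mx i k - mx i k with hwv
  -- one of the two first families has total width ≤ 3
  obtain ⟨i, hsum3⟩ : ∃ i, wv i 0 + wv i 1 + wv i 2 ≤ 3 := by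
    rcases le_or_gt (wv 0 0 + wv 0 1 + wv 0 2) 3 with hi | hi
    · exact ⟨0, hi⟩
    · refine ⟨1, ?_⟩
      have h01 : (0 : Fin 3) ≠ 1 := by decide
      have h10 : (1 : Fin 3) ≠ 0 := by decide
      have a0 := hMm 0 1 h01 0
      have a1 := hMm 0 1 h01 1
      have a2 := hMm 0 1 h01 2
      have b0 := hMm 1 0 h10 0
      have b1 := hMm 1 0 h10 1
      have b2 := hMm 1 0 h10 2
      simp only [hwv] at hi ⊢
      linarith
  refine ⟨i, ?_⟩
  -- a helper producing the final piercing set from three weight vectors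
  have finish : ∀ (av1 av2 av3 : Fin 3 → ℝ),
      av1 0 + av1 1 + av1 2 = 1 → av2 0 + av2 1 + av2 2 = 1 → av3 0 + av3 1 + av3 2 = 1 →
      (∀ t, t ∈ Ti i →
        (∀ k, lin k t ≤ av1 k) ∨ (∀ k, lin k t ≤ av2 k) ∨ (∀ k, lin k t ≤ av3 k)) →
      ∃ S : Finset (EuclideanSpace ℝ (Fin 2)), S.card ≤ 3 ∧ ∀ A ∈ F i, ∃ p ∈ S, p ∈ A := by
    intro av1 av2 av3 h1 h2 h3 hcov
    refine ⟨{pt av1, pt av2, pt av3}, ?_, ?_⟩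
    · apply le_trans (Finset.card_insert_le _ _)
      have := Finset.card_insert_le (pt av2) ({pt av3} : Finset (EuclideanSpace ℝ (Fin 2)))
      simp only [Finset.card_singleton] at this ⊢
      omega
    · intro A hA
      have ht : τ i A hA ∈ Ti i := hτTi i A hA
      have hAeq : A = T + {τ i A hA} := hτ i A hA
      rcases hcov _ ht with hc | hc | hc
      · exact ⟨pt av1, by simp, by rw [hAeq]; exact hpt_mem av1 _ h1 hc⟩
      · exact ⟨pt av2, by simp, by rw [hAeq]; exact hpt_mem av2 _ h2 hc⟩
      · exact ⟨pt av3, by simp, by rw [hAeq]; exact hpt_mem av3 _ h3 hc⟩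
  -- case analysis on which coordinate has minimal width
  have hbounds : ∀ t, t ∈ Ti i → ∀ k, mx i k ≤ lin k t ∧ lin k t ≤ Mx i k :=
    fun t ht k => ⟨hlb i k t ht, hub i k t ht⟩
  have hsumlin' : ∀ t, lin 0 t + lin 1 t + lin 2 t = 0 := hsumlin
  rcases le_total (wv i 0) (wv i 1) with h01 | h01
  · rcases le_total (wv i 0) (wv i 2) with h02 | h02
    · -- base coordinate 0
      have hG : 2*(Mx i 0 - mx i 0) + (Mx i 1 - mx i 1) + (Mx i 2 - mx i 2) ≤ 4 := by
        simp only [hwv] at hsum3 h01 h02; linarith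
      obtain ⟨a0, a1, a2, b0, b1, b2, c0, c1, c2, hs1, hs2, hs3, hcov⟩ :=
        dolnikov_schemeG (mx i 0) (mx i 1) (mx i 2) (Mx i 0) (Mx i 1) (Mx i 2) hG
      refine finish ![a0, a1, a2] ![b0, b1, b2] ![c0, c1, c2] (by simpa using hs1) (by simpa using hs2) (by simpa using hs3) ?_
      intro t ht
      obtain ⟨l0, u0⟩ := hbounds t ht 0
      obtain ⟨l1, u1⟩ := hbounds t ht 1
      obtain ⟨l2, u2⟩ := hbounds t ht 2
      rcases hcov (lin 0 t) (lin 1 t) (lin 2 t) (hsumlin' t) l0 u0 l1 u1 l2 u2 with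
        ⟨p, q, r⟩ | ⟨p, q, r⟩ | ⟨p, q, r⟩
      · refine Or.inl fun k => ?_
        fin_cases k
        exacts [p, q, r]
      · refine Or.inr (Or.inl fun k => ?_)
        fin_cases k
        exacts [p, q, r]
      · refine Or.inr (Or.inr fun k => ?_)
        fin_cases k
        exacts [p, q, r]
    · -- base coordinate 2 (roles: base=2, then 0, 1)
      have hG : 2*(Mx i 2 - mx i 2) + (Mx i 0 - mx i 0) + (Mx i 1 - mx i 1) ≤ 4 := by
        simp only [hwv] at hsum3 h01 h02; linarith
      obtain ⟨a0, a1, a2, b0, b1, b2, c0, c1, c2, hs1, hs2, hs3, hcov⟩ :=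
        dolnikov_schemeG (mx i 2) (mx i 0) (mx i 1) (Mx i 2) (Mx i 0) (Mx i 1) hG
      refine finish ![a1, a2, a0] ![b1, b2, b0] ![c1, c2, c0]
        (by simp; linarith) (by simp; linarith) (by simp; linarith) ?_
      intro t ht
      obtain ⟨l0, u0⟩ := hbounds t ht 0
      obtain ⟨l1, u1⟩ := hbounds t ht 1
      obtain ⟨l2, u2⟩ := hbounds t ht 2
      rcases hcov (lin 2 t) (lin 0 t) (lin 1 t) (by linarith [hsumlin' t]) l2 u2 l0 u0 l1 u1 with
        ⟨p, q, r⟩ | ⟨p, q, r⟩ | ⟨p, q, r⟩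
      · refine Or.inl fun k => ?_
        fin_cases k
        exacts [q, r, p]
      · refine Or.inr (Or.inl fun k => ?_)
        fin_cases k
        exacts [q, r, p]
      · refine Or.inr (Or.inr fun k => ?_)
        fin_cases k
        exacts [q, r, p]
  · rcases le_total (wv i 1) (wv i 2) with h12 | h12
    · -- base coordinate 1 (roles: base=1, then 0, 2)
      have hG : 2*(Mx i 1 - mx i 1) + (Mx i 0 - mx i 0) + (Mx i 2 - mx i 2) ≤ 4 := by
        simp only [hwv] at hsum3 h01 h12; linarith
      obtain ⟨a0, a1, a2, b0, b1, b2, c0, c1, c2, hs1, hs2, hs3, hcov⟩ :=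
        dolnikov_schemeG (mx i 1) (mx i 0) (mx i 2) (Mx i 1) (Mx i 0) (Mx i 2) hG
      refine finish ![a1, a0, a2] ![b1, b0, b2] ![c1, c0, c2]
        (by simp; linarith) (by simp; linarith) (by simp; linarith) ?_
      intro t ht
      obtain ⟨l0, u0⟩ := hbounds t ht 0
      obtain ⟨l1, u1⟩ := hbounds t ht 1
      obtain ⟨l2, u2⟩ := hbounds t ht 2
      rcases hcov (lin 1 t) (lin 0 t) (lin 2 t) (by linarith [hsumlin' t]) l1 u1 l0 u0 l2 u2 with
        ⟨p, q, r⟩ | ⟨p, q, r⟩ | ⟨p, q, r⟩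
      · refine Or.inl fun k => ?_
        fin_cases k
        exacts [q, p, r]
      · refine Or.inr (Or.inl fun k => ?_)
        fin_cases k
        exacts [q, p, r]
      · refine Or.inr (Or.inr fun k => ?_)
        fin_cases k
        exacts [q, p, r]
    · -- base coordinate 2
      have hG : 2*(Mx i 2 - mx i 2) + (Mx i 0 - mx i 0) + (Mx i 1 - mx i 1) ≤ 4 := by
        simp only [hwv] at hsum3 h01 h12; linarith
      obtain ⟨a0, a1, a2, b0, b1, b2, c0, c1, c2, hs1, hs2, hs3, hcov⟩ :=
        dolnikov_schemeG (mx i 2) (mx i 0) (mx i 1) (Mx i 2) (Mx i 0) (Mx i 1) hG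
      refine finish ![a1, a2, a0] ![b1, b2, b0] ![c1, c2, c0]
        (by simp; linarith) (by simp; linarith) (by simp; linarith) ?_
      intro t ht
      obtain ⟨l0, u0⟩ := hbounds t ht 0
      obtain ⟨l1, u1⟩ := hbounds t ht 1
      obtain ⟨l2, u2⟩ := hbounds t ht 2
      rcases hcov (lin 2 t) (lin 0 t) (lin 1 t) (by linarith [hsumlin' t]) l2 u2 l0 u0 l1 u1 with
        ⟨p, q, r⟩ | ⟨p, q, r⟩ | ⟨p, q, r⟩
      · refine Or.inl fun k => ?_
        fin_cases k
        exacts [q, r, p]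
      · refine Or.inr (Or.inl fun k => ?_)
        fin_cases k
        exacts [q, r, p]
      · refine Or.inr (Or.inr fun k => ?_)
        fin_cases k
        exacts [q, r, p]
end

section
/- Let T ⊆ ℝ² be the closed regular triangle with vertices (0,0), (1,0), (1/2, √3/2). Let X₁, X₂, X₃ be three nonempty finite subsets of ℝ² such that x' − x'' ∈ T + (−T) (the Minkowski difference body of T) for every pair of points x' ∈ X_i, x'' ∈ X_j with i ≠ j. Then there exists m ∈ {1,2,3} and points t₁, t₂, t₃ ∈ ℝ² such that X_m ⊆ (T + t₁) ∪ (T + t₂) ∪ (T + t₃), i.e., X_m can be covered by three translates of T. -/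
open Pointwise

namespace DolnikovAux
noncomputable section

abbrev E2 := EuclideanSpace ℝ (Fin 2)

noncomputable def dd (k : Fin 3) (x : E2) : ℝ :=
  if k = 0 then x 1
  else if k = 1 then (Real.sqrt 3 * (1 - x 0) - x 1) / 2
  else (Real.sqrt 3 * x 0 - x 1) / 2

lemma dd_zero (x : E2) : dd 0 x = x 1 := rfl
lemma dd_one (x : E2) : dd 1 x = (Real.sqrt 3 * (1 - x 0) - x 1) / 2 := rfl
lemma dd_two (x : E2) : dd 2 x = (Real.sqrt 3 * x 0 - x 1) / 2 := rfl

lemma dd_sum (x : E2) : dd 0 x + dd 1 x + dd 2 x = Real.sqrt 3 / 2 := by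
  rw [dd_zero, dd_one, dd_two]; ring

lemma sqrt3_pos : (0:ℝ) < Real.sqrt 3 := Real.sqrt_pos.mpr (by norm_num)
lemma sqrt3_ne : Real.sqrt 3 ≠ 0 := ne_of_gt sqrt3_pos
lemma sqrt3_sq : Real.sqrt 3 * Real.sqrt 3 = 3 := Real.mul_self_sqrt (by norm_num)

lemma mem_T_iff (T : Set E2)
    (hT : T = convexHull ℝ
      {(!₂[0, 0] : E2), (!₂[1, 0] : E2), (!₂[1 / 2, Real.sqrt 3 / 2] : E2)}) (x : E2) :
    x ∈ T ↔ 0 ≤ dd 0 x ∧ 0 ≤ dd 1 x ∧ 0 ≤ dd 2 x := by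
  subst hT
  constructor
  · intro hx
    have hconv : Convex ℝ {y : E2 | 0 ≤ dd 0 y ∧ 0 ≤ dd 1 y ∧ 0 ≤ dd 2 y} := by
      intro p hp q hq a b ha hb hab
      have e0 : dd 0 (a • p + b • q) = a * dd 0 p + b * dd 0 q := by
        simp only [dd_zero, PiLp.add_apply, PiLp.smul_apply, smul_eq_mul]
      have e1 : dd 1 (a • p + b • q) = a * dd 1 p + b * dd 1 q := by
        simp only [dd_one, PiLp.add_apply, PiLp.smul_apply, smul_eq_mul]
        linear_combination (-(Real.sqrt 3)/2) * hab
      have e2 : dd 2 (a • p + b • q) = a * dd 2 p + b * dd 2 q := by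
        simp only [dd_two, PiLp.add_apply, PiLp.smul_apply, smul_eq_mul]
        ring
      refine ⟨?_, ?_, ?_⟩
      · rw [e0]; exact add_nonneg (mul_nonneg ha hp.1) (mul_nonneg hb hq.1)
      · rw [e1]; exact add_nonneg (mul_nonneg ha hp.2.1) (mul_nonneg hb hq.2.1)
      · rw [e2]; exact add_nonneg (mul_nonneg ha hp.2.2) (mul_nonneg hb hq.2.2)
    have hsub : ({(!₂[0, 0] : E2), (!₂[1, 0] : E2), (!₂[1 / 2, Real.sqrt 3 / 2] : E2)} : Set E2)
        ⊆ {y : E2 | 0 ≤ dd 0 y ∧ 0 ≤ dd 1 y ∧ 0 ≤ dd 2 y} := by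
      intro v hv
      rcases hv with rfl | rfl | rfl <;>
        refine ⟨?_, ?_, ?_⟩ <;>
          · simp only [dd_zero, dd_one, dd_two, Matrix.cons_val_zero, Matrix.cons_val_one,
              Matrix.head_cons]
            linarith [Real.sqrt_nonneg 3]
    exact convexHull_min hsub hconv hx
  · rintro ⟨h0, h1, h2⟩
    set c : Fin 3 → ℝ := ![2 / Real.sqrt 3 * dd 1 x, 2 / Real.sqrt 3 * dd 2 x,
      2 / Real.sqrt 3 * dd 0 x] with hc
    set z : Fin 3 → E2 := ![(!₂[0, 0] : E2), (!₂[1, 0] : E2), (!₂[1 / 2, Real.sqrt 3 / 2] : E2)]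
      with hz
    have hxz : x = ∑ i : Fin 3, c i • z i := by
      rw [Fin.sum_univ_three]
      have hzz : ∀ i : Fin 2, x i = (c 0 • z 0 + c 1 • z 1 + c 2 • z 2) i := by
        intro i
        fin_cases i <;>
          · simp only [hc, hz, PiLp.add_apply, PiLp.smul_apply, smul_eq_mul,
              Matrix.cons_val_zero, Matrix.cons_val_one, Matrix.head_cons,
              dd_zero, dd_one, dd_two, Fin.zero_eta, Fin.mk_one, Matrix.cons_val_two,
              Matrix.tail_cons, PiLp.toLp_apply]
            field_simp
            try ring
      exact PiLp.ext hzz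
    rw [hxz]
    refine Convex.sum_mem (convex_convexHull ℝ _) (fun i _ => ?_) ?_ (fun i _ => ?_)
    · fin_cases i
      · exact mul_nonneg (by positivity) h1
      · exact mul_nonneg (by positivity) h2
      · exact mul_nonneg (by positivity) h0
    · have hs := dd_sum x
      rw [Fin.sum_univ_three]
      simp only [hc, Matrix.cons_val_zero, Matrix.cons_val_one, Matrix.head_cons,
        Matrix.cons_val_two, Matrix.tail_cons]
      field_simp
      linarith
    · apply subset_convexHull
      fin_cases i <;> simp [hz]

/-- The translate vector realizing thresholds `(u, -(u+w), w)` for `(dd 0, dd 1, dd 2)`. -/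
noncomputable def tvec (u w : ℝ) : E2 := !₂[(u + 2 * w) / Real.sqrt 3, u]

lemma mem_translate (T : Set E2)
    (hT : T = convexHull ℝ
      {(!₂[0, 0] : E2), (!₂[1, 0] : E2), (!₂[1 / 2, Real.sqrt 3 / 2] : E2)})
    (u w : ℝ) (x : E2) :
    x ∈ T + {tvec u w} ↔ (u ≤ dd 0 x ∧ -(u + w) ≤ dd 1 x ∧ w ≤ dd 2 x) := by
  have key : Real.sqrt 3 * ((u + 2 * w) / Real.sqrt 3) = u + 2 * w :=
    mul_div_cancel₀ _ sqrt3_ne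
  constructor
  · rintro ⟨p, hp, q, hq, hpq⟩
    rw [Set.mem_singleton_iff] at hq
    subst hq
    obtain ⟨h0, h1, h2⟩ := (mem_T_iff T hT p).mp hp
    rw [dd_zero] at h0; rw [dd_one] at h1; rw [dd_two] at h2
    have e0 : x 0 = p 0 + (u + 2 * w) / Real.sqrt 3 := by
      rw [← hpq]; simp [tvec, PiLp.add_apply]
    have e1 : x 1 = p 1 + u := by
      rw [← hpq]; simp [tvec, PiLp.add_apply]
    refine ⟨?_, ?_, ?_⟩
    · rw [dd_zero, e1]; linarith
    · rw [dd_one, e0, e1, mul_sub, mul_add, key]; linarith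
    · rw [dd_two, e0, e1, mul_add, key]; linarith
  · rintro ⟨h0, h1, h2⟩
    rw [dd_zero] at h0; rw [dd_one] at h1; rw [dd_two] at h2
    refine ⟨x - tvec u w, ?_, tvec u w, rfl, sub_add_cancel x (tvec u w)⟩
    rw [mem_T_iff T hT]
    have e0 : (x - tvec u w) 0 = x 0 - (u + 2 * w) / Real.sqrt 3 := by
      simp [tvec, PiLp.sub_apply]
    have e1 : (x - tvec u w) 1 = x 1 - u := by
      simp [tvec, PiLp.sub_apply]
    refine ⟨?_, ?_, ?_⟩
    · rw [dd_zero, e1]; linarith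
    · rw [dd_one, e0, e1, mul_sub, mul_sub, key]; linarith
    · rw [dd_two, e0, e1, mul_sub, key]; linarith

lemma cross_bound (T : Set E2)
    (hT : T = convexHull ℝ
      {(!₂[0, 0] : E2), (!₂[1, 0] : E2), (!₂[1 / 2, Real.sqrt 3 / 2] : E2)})
    {x y : E2} (hxy : x - y ∈ T + (-T)) (k : Fin 3) :
    dd k x - dd k y ≤ Real.sqrt 3 / 2 := by
  obtain ⟨p, hp, q, hq, hpq⟩ := hxy
  rw [Set.mem_neg] at hq
  obtain ⟨hp0, hp1, hp2⟩ := (mem_T_iff T hT p).mp hp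
  obtain ⟨hq0, hq1, hq2⟩ := (mem_T_iff T hT (-q)).mp hq
  have hsp := dd_sum p
  have hsq := dd_sum (-q)
  have e0' := congrArg (fun v : E2 => v 0) hpq
  have e1' := congrArg (fun v : E2 => v 1) hpq
  simp only [PiLp.add_apply, PiLp.sub_apply] at e0' e1'
  have e0 : p 0 + q 0 = x 0 - y 0 := e0'
  have e1 : p 1 + q 1 = x 1 - y 1 := e1' 
  have n0 : (-q) 0 = -(q 0) := by simp [PiLp.neg_apply]
  have n1 : (-q) 1 = -(q 1) := by simp [PiLp.neg_apply]
  rw [dd_zero] at hp0 hq0; rw [dd_one] at hp1 hq1; rw [dd_two] at hp2 hq2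
  rw [dd_zero, dd_one, dd_two] at hsp hsq
  rw [n0, n1] at hq1 hq2 hsq
  rw [n1] at hq0
  have m0 : Real.sqrt 3 * (p 0 + q 0) = Real.sqrt 3 * (x 0 - y 0) := by rw [e0]
  have goal0 : dd 0 x - dd 0 y ≤ Real.sqrt 3 / 2 := by
    rw [dd_zero, dd_zero]; linarith
  have goal1 : dd 1 x - dd 1 y ≤ Real.sqrt 3 / 2 := by
    rw [dd_one, dd_one]; linarith
  have goal2 : dd 2 x - dd 2 y ≤ Real.sqrt 3 / 2 := by
    rw [dd_two, dd_two]; linarith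
  fin_cases k
  · exact goal0
  · exact goal1
  · exact goal2

lemma corner_cover (T : Set E2)
    (hT : T = convexHull ℝ
      {(!₂[0, 0] : E2), (!₂[1, 0] : E2), (!₂[1 / 2, Real.sqrt 3 / 2] : E2)})
    (S : Finset E2) (A0 A1 A2 : ℝ)
    (h0 : ∀ p ∈ S, A0 ≤ dd 0 p) (h1 : ∀ p ∈ S, A1 ≤ dd 1 p) (h2 : ∀ p ∈ S, A2 ≤ dd 2 p)
    (hsum : -(Real.sqrt 3 / 4) ≤ A0 + A1 + A2) :
    ∃ t₁ t₂ t₃ : E2, (S : Set E2) ⊆ (T + {t₁}) ∪ (T + {t₂}) ∪ (T + {t₃}) := by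
  refine ⟨tvec (-A1 - A2) A2, tvec A0 A2, tvec A0 (-A0 - A1), ?_⟩
  intro p hp
  rw [Finset.mem_coe] at hp
  by_contra hco
  simp only [Set.mem_union, not_or, mem_translate T hT, not_and_or, not_le] at hco
  obtain ⟨⟨f1, f2⟩, f3⟩ := hco
  have b0 := h0 p hp
  have b1 := h1 p hp
  have b2 := h2 p hp
  have hs := dd_sum p
  have g1 : dd 0 p < -A1 - A2 := by
    rcases f1 with h | h | h
    · exact h
    · exfalso; have : -(-A1 - A2 + A2) = A1 := by ring
      rw [this] at h; linarith
    · exact absurd h (by linarith)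
  have g2 : dd 1 p < -A0 - A2 := by
    rcases f2 with h | h | h
    · exact absurd h (by linarith)
    · have : -(A0 + A2) = -A0 - A2 := by ring
      rw [this] at h; exact h
    · exact absurd h (by linarith)
  have g3 : dd 2 p < -A0 - A1 := by
    rcases f3 with h | h | h
    · exact absurd h (by linarith)
    · exfalso; have : -(A0 + (-A0 - A1)) = A1 := by ring
      rw [this] at h; linarith
    · exact h
  have hsq3 := sqrt3_pos
  linarith

lemma sym_cover (T : Set E2)
    (hT : T = convexHull ℝ
      {(!₂[0, 0] : E2), (!₂[1, 0] : E2), (!₂[1 / 2, Real.sqrt 3 / 2] : E2)})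
    (S : Finset E2) (A0 A1 A2 B0 B1 B2 : ℝ)
    (hA0 : ∀ p ∈ S, A0 ≤ dd 0 p) (hA1 : ∀ p ∈ S, A1 ≤ dd 1 p) (hA2 : ∀ p ∈ S, A2 ≤ dd 2 p)
    (hB0 : ∀ p ∈ S, dd 0 p ≤ B0) (hB1 : ∀ p ∈ S, dd 1 p ≤ B1) (hB2 : ∀ p ∈ S, dd 2 p ≤ B2)
    (hσ : -(Real.sqrt 3) ≤ A0 + A1 + A2)
    (hp0 : B0 - A0 + (B1 - A1) ≤ Real.sqrt 3 ∨ B0 - A0 + (B2 - A2) ≤ Real.sqrt 3)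
    (hp1 : B1 - A1 + (B0 - A0) ≤ Real.sqrt 3 ∨ B1 - A1 + (B2 - A2) ≤ Real.sqrt 3)
    (hp2 : B2 - A2 + (B0 - A0) ≤ Real.sqrt 3 ∨ B2 - A2 + (B1 - A1) ≤ Real.sqrt 3) :
    ∃ t₁ t₂ t₃ : E2, (S : Set E2) ⊆ (T + {t₁}) ∪ (T + {t₂}) ∪ (T + {t₃}) := by
  refine ⟨tvec A0 ((B2 - A0 - B1) / 2), tvec ((B0 - A1 - B2) / 2) ((B2 - B0 - A1) / 2),
    tvec ((B0 - B1 - A2) / 2) A2, ?_⟩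
  intro p hp
  rw [Finset.mem_coe] at hp
  by_contra hco
  simp only [Set.mem_union, not_or, mem_translate T hT, not_and_or, not_le] at hco
  obtain ⟨⟨f1, f2⟩, f3⟩ := hco
  have a0 := hA0 p hp; have a1 := hA1 p hp; have a2 := hA2 p hp
  have b0 := hB0 p hp; have b1 := hB1 p hp; have b2 := hB2 p hp
  have hs := dd_sum p
  -- triangle 0 fails via coordinate 1 or 2
  have g1 : dd 1 p < (B1 - A0 - B2) / 2 ∨ dd 2 p < (B2 - A0 - B1) / 2 := by
    rcases f1 with h | h | h
    · exact absurd h (by linarith)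
    · left; linarith
    · right; exact h
  have g2 : dd 0 p < (B0 - A1 - B2) / 2 ∨ dd 2 p < (B2 - B0 - A1) / 2 := by
    rcases f2 with h | h | h
    · left; exact h
    · exfalso; linarith
    · right; exact h
  have g3 : dd 0 p < (B0 - B1 - A2) / 2 ∨ dd 1 p < (B1 - B0 - A2) / 2 := by
    rcases f3 with h | h | h
    · left; exact h
    · right; linarith
    · exact absurd h (by linarith)
  rcases g1 with g1 | g1 <;> rcases g2 with g2 | g2 <;> rcases g3 with g3 | g3
  · rcases hp0 with h | h <;> linarith
  · rcases hp1 with h | h <;> linarith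
  · linarith
  · rcases hp1 with h | h <;> linarith
  · rcases hp0 with h | h <;> linarith
  · linarith
  · rcases hp2 with h | h <;> linarith
  · rcases hp2 with h | h <;> linarith

end
end DolnikovAux


open DolnikovAux in
/-- Restated Dol'nikov problem for the regular triangle: given three nonempty
finite point sets in the plane such that the difference of any two points
from different sets lies in the difference body `T + (-T)` of the regular
unit triangle `T`, one of the sets can be covered by three translates of `T`. -/
theorem dolnikov_triangle_covering
    (T : Set (EuclideanSpace ℝ (Fin 2)))
    (hT : T = convexHull ℝ
      {(!₂[0, 0] : EuclideanSpace ℝ (Fin 2)), (!₂[1, 0] : EuclideanSpace ℝ (Fin 2)),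
        (!₂[1 / 2, Real.sqrt 3 / 2] : EuclideanSpace ℝ (Fin 2))})
    (X : Fin 3 → Finset (EuclideanSpace ℝ (Fin 2)))
    (hXne : ∀ i, (X i).Nonempty)
    (hdist : ∀ i j, i ≠ j → ∀ x ∈ X i, ∀ y ∈ X j, x - y ∈ T + (-T)) :
    ∃ m : Fin 3, ∃ t₁ t₂ t₃ : EuclideanSpace ℝ (Fin 2),
      (X m : Set (EuclideanSpace ℝ (Fin 2))) ⊆ (T + {t₁}) ∪ (T + {t₂}) ∪ (T + {t₃}) := by
  classical
  set A : Fin 3 → Fin 3 → ℝ := fun i k => (X i).inf' (hXne i) (dd k) with hAdef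
  set B : Fin 3 → Fin 3 → ℝ := fun i k => (X i).sup' (hXne i) (dd k) with hBdef
  have hA : ∀ i k, ∀ p ∈ X i, A i k ≤ dd k p := by
    intro i k p hp
    simp only [hAdef]
    exact Finset.inf'_le _ hp
  have hB : ∀ i k, ∀ p ∈ X i, dd k p ≤ B i k := by
    intro i k p hp
    simp only [hBdef]
    exact Finset.le_sup' _ hp
  have cross : ∀ i j, i ≠ j → ∀ k, B i k ≤ A j k + Real.sqrt 3 / 2 := by
    intro i j hij k
    simp only [hAdef, hBdef]
    apply Finset.sup'_le
    intro x hx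
    have h1 : dd k x - Real.sqrt 3 / 2 ≤ (X j).inf' (hXne j) (dd k) := by
      apply Finset.le_inf'
      intro y hy
      have := cross_bound T hT (hdist i j hij x hx y hy) k
      linarith
    linarith
  have attain : ∀ i, 3 * (Real.sqrt 3 / 2) - 2 * (B i 0 + B i 1 + B i 2)
      ≤ A i 0 + A i 1 + A i 2 := by
    intro i
    have h0 : Real.sqrt 3 / 2 - (B i 1 + B i 2) ≤ A i 0 := by
      obtain ⟨p, hp, hpe⟩ := Finset.exists_mem_eq_inf' (hXne i) (dd 0)
      have c1 := hB i 1 p hp; have c2 := hB i 2 p hp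
      have hs := dd_sum p
      have : A i 0 = dd 0 p := by simp only [hAdef]; exact hpe
      rw [this]; linarith
    have h1 : Real.sqrt 3 / 2 - (B i 0 + B i 2) ≤ A i 1 := by
      obtain ⟨p, hp, hpe⟩ := Finset.exists_mem_eq_inf' (hXne i) (dd 1)
      have c1 := hB i 0 p hp; have c2 := hB i 2 p hp
      have hs := dd_sum p
      have : A i 1 = dd 1 p := by simp only [hAdef]; exact hpe
      rw [this]; linarith
    have h2 : Real.sqrt 3 / 2 - (B i 0 + B i 1) ≤ A i 2 := by
      obtain ⟨p, hp, hpe⟩ := Finset.exists_mem_eq_inf' (hXne i) (dd 2)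
      have c1 := hB i 0 p hp; have c2 := hB i 1 p hp
      have hs := dd_sum p
      have : A i 2 = dd 2 p := by simp only [hAdef]; exact hpe
      rw [this]; linarith
    linarith
  have n01 : (0 : Fin 3) ≠ 1 := by decide
  have n10 : (1 : Fin 3) ≠ 0 := by decide
  by_cases c0 : -(Real.sqrt 3 / 4) ≤ A 0 0 + A 0 1 + A 0 2
  · obtain ⟨t1, t2, t3, hc⟩ := corner_cover T hT (X 0) _ _ _ (hA 0 0) (hA 0 1) (hA 0 2) c0
    exact ⟨0, t1, t2, t3, hc⟩
  by_cases c1 : -(Real.sqrt 3 / 4) ≤ A 1 0 + A 1 1 + A 1 2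
  · obtain ⟨t1, t2, t3, hc⟩ := corner_cover T hT (X 1) _ _ _ (hA 1 0) (hA 1 1) (hA 1 2) c1
    exact ⟨1, t1, t2, t3, hc⟩
  push_neg at c0 c1
  have hsig0 : -(Real.sqrt 3) ≤ A 0 0 + A 0 1 + A 0 2 := by
    have hb := attain 0
    have d0 := cross 0 1 n01 0; have d1 := cross 0 1 n01 1; have d2 := cross 0 1 n01 2
    linarith
  have hsig1 : -(Real.sqrt 3) ≤ A 1 0 + A 1 1 + A 1 2 := by
    have hb := attain 1
    have d0 := cross 1 0 n10 0; have d1 := cross 1 0 n10 1; have d2 := cross 1 0 n10 2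
    linarith
  by_cases p0 : ∀ j : Fin 3, ∃ k, k ≠ j ∧
      (B 0 j - A 0 j) + (B 0 k - A 0 k) ≤ Real.sqrt 3
  · have hq0 : B 0 0 - A 0 0 + (B 0 1 - A 0 1) ≤ Real.sqrt 3 ∨
        B 0 0 - A 0 0 + (B 0 2 - A 0 2) ≤ Real.sqrt 3 := by
      obtain ⟨k, hk, hle⟩ := p0 0
      fin_cases k
      · exact absurd rfl hk
      · exact Or.inl hle
      · exact Or.inr hle
    have hq1 : B 0 1 - A 0 1 + (B 0 0 - A 0 0) ≤ Real.sqrt 3 ∨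
        B 0 1 - A 0 1 + (B 0 2 - A 0 2) ≤ Real.sqrt 3 := by
      obtain ⟨k, hk, hle⟩ := p0 1
      fin_cases k
      · exact Or.inl hle
      · exact absurd rfl hk
      · exact Or.inr hle
    have hq2 : B 0 2 - A 0 2 + (B 0 0 - A 0 0) ≤ Real.sqrt 3 ∨
        B 0 2 - A 0 2 + (B 0 1 - A 0 1) ≤ Real.sqrt 3 := by
      obtain ⟨k, hk, hle⟩ := p0 2
      fin_cases k
      · exact Or.inl hle
      · exact Or.inr hle
      · exact absurd rfl hk
    obtain ⟨t1, t2, t3, hc⟩ := sym_cover T hT (X 0) _ _ _ _ _ _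
      (hA 0 0) (hA 0 1) (hA 0 2) (hB 0 0) (hB 0 1) (hB 0 2) hsig0 hq0 hq1 hq2
    exact ⟨0, t1, t2, t3, hc⟩
  by_cases p1 : ∀ j : Fin 3, ∃ k, k ≠ j ∧
      (B 1 j - A 1 j) + (B 1 k - A 1 k) ≤ Real.sqrt 3
  · have hq0 : B 1 0 - A 1 0 + (B 1 1 - A 1 1) ≤ Real.sqrt 3 ∨
        B 1 0 - A 1 0 + (B 1 2 - A 1 2) ≤ Real.sqrt 3 := by
      obtain ⟨k, hk, hle⟩ := p1 0
      fin_cases k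
      · exact absurd rfl hk
      · exact Or.inl hle
      · exact Or.inr hle
    have hq1 : B 1 1 - A 1 1 + (B 1 0 - A 1 0) ≤ Real.sqrt 3 ∨
        B 1 1 - A 1 1 + (B 1 2 - A 1 2) ≤ Real.sqrt 3 := by
      obtain ⟨k, hk, hle⟩ := p1 1
      fin_cases k
      · exact Or.inl hle
      · exact absurd rfl hk
      · exact Or.inr hle
    have hq2 : B 1 2 - A 1 2 + (B 1 0 - A 1 0) ≤ Real.sqrt 3 ∨
        B 1 2 - A 1 2 + (B 1 1 - A 1 1) ≤ Real.sqrt 3 := by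
      obtain ⟨k, hk, hle⟩ := p1 2
      fin_cases k
      · exact Or.inl hle
      · exact Or.inr hle
      · exact absurd rfl hk
    obtain ⟨t1, t2, t3, hc⟩ := sym_cover T hT (X 1) _ _ _ _ _ _
      (hA 1 0) (hA 1 1) (hA 1 2) (hB 1 0) (hB 1 1) (hB 1 2) hsig1 hq0 hq1 hq2
    exact ⟨1, t1, t2, t3, hc⟩
  exfalso
  push_neg at p0 p1
  obtain ⟨j0, hj0⟩ := p0
  obtain ⟨j1, hj1⟩ := p1
  have crossr : ∀ k : Fin 3, (B 0 k - A 0 k) + (B 1 k - A 1 k) ≤ Real.sqrt 3 := by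
    intro k
    have u := cross 0 1 n01 k; have v := cross 1 0 n10 k
    linarith
  have hplus : ∀ a : Fin 3, a + 1 ≠ a := by decide
  rcases eq_or_ne j1 j0 with he | hne
  · subst he
    have u0 := hj0 (j1 + 1) (hplus j1)
    have u1 := hj1 (j1 + 1) (hplus j1)
    have w0 := crossr j1
    have w1 := crossr (j1 + 1)
    linarith
  · have u0 := hj0 j1 hne
    have u1 := hj1 j0 hne.symm
    have w0 := crossr j0
    have w1 := crossr j1
    linarith
end

section
/- Let K be a nonempty compact convex set in the plane ℝ² with K = −K, and let μ ≥ 0 be a real number with the following (Jung) property: every subset S ⊆ ℝ² satisfying s − s' ∈ 2K for all s, s' ∈ S is contained in some translate z + μK. Let X₁, X₂, X₃ be three nonempty finite subsets of ℝ² such that x' − x'' ∈ 2K for every pair of points x' ∈ X_i, x'' ∈ X_j with i ≠ j. Then there exists m ∈ {1,2,3} and a point z ∈ ℝ² such that X_m ⊆ z + μK, i.e., X_m is covered by a single translate of μK. -/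
open Pointwise

set_option linter.unusedVariables false

local notation "E2" => EuclideanSpace ℝ (Fin 2)

noncomputable def jphi (v : E2) : ℝ ×ₗ ℝ := toLex (v 0, v 1)

lemma jphi_inj : Function.Injective jphi := by
  intro p q h
  have h' : (p 0, p 1) = (q 0, q 1) := toLex.injective h
  ext i
  fin_cases i
  · exact congrArg Prod.fst h'
  · exact congrArg Prod.snd h'

lemma jung_exists_min (A : Set E2) (hA : IsCompact A) (hne : A.Nonempty) :
    ∃ p ∈ A, ∀ q ∈ A, jphi p ≤ jphi q := by
  have hc0 : Continuous (fun x : E2 => x 0) := (EuclideanSpace.proj (0 : Fin 2)).continuous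
  have hc1 : Continuous (fun x : E2 => x 1) := (EuclideanSpace.proj (1 : Fin 2)).continuous
  obtain ⟨a, haA, ha⟩ := hA.exists_isMinOn hne hc0.continuousOn
  set A1 : Set E2 := A ∩ {x | x 0 = a 0} with hA1
  have hA1cpt : IsCompact A1 := hA.inter_right (isClosed_eq hc0 continuous_const)
  have hA1ne : A1.Nonempty := ⟨a, haA, rfl⟩
  obtain ⟨p, ⟨hpA, hp0⟩, hp⟩ := hA1cpt.exists_isMinOn hA1ne hc1.continuousOn
  refine ⟨p, hpA, fun q hq => ?_⟩
  simp only [jphi]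
  refine Prod.Lex.le_iff.mpr ?_
  simp only [ofLex_toLex]
  have haq : a 0 ≤ q 0 := isMinOn_iff.mp ha q hq
  have hp0' : p 0 = a 0 := hp0
  rcases lt_or_eq_of_le haq with h | h
  · left; rw [hp0']; exact h
  · right
    refine ⟨by rw [hp0', h], ?_⟩
    exact isMinOn_iff.mp hp q ⟨hq, h.symm⟩

lemma jung_aux_combo {a b x y c : ℝ} (ha : 0 ≤ a) (hb : 0 ≤ b) (hab : a + b = 1)
    (hx : x < c) (hy : y < c) : a * x + b * y < c := by
  have hc : a * c + b * c = c := by rw [← add_mul, hab, one_mul]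
  rcases eq_or_lt_of_le ha with h | h
  · have hb1 : b = 1 := by linarith
    simp [← h, hb1]; linarith
  · have h1 : a * x < a * c := mul_lt_mul_of_pos_left hx h
    have h2 : b * y ≤ b * c := mul_le_mul_of_nonneg_left hy.le hb
    linarith

lemma jung_convex_lt (p : E2) : Convex ℝ {q : E2 | jphi q < jphi p} := by
  intro q hq r hr a b ha hb hab
  simp only [Set.mem_setOf_eq, jphi, Prod.Lex.lt_iff, ofLex_toLex] at hq hr ⊢
  have e0 : (a • q + b • r) 0 = a * q 0 + b * r 0 := by
    simp [PiLp.add_apply, PiLp.smul_apply, smul_eq_mul]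
  have e1 : (a • q + b • r) 1 = a * q 1 + b * r 1 := by
    simp [PiLp.add_apply, PiLp.smul_apply, smul_eq_mul]
  rw [e0, e1]
  have hc : a * p 0 + b * p 0 = p 0 := by rw [← add_mul, hab, one_mul]
  rcases eq_or_lt_of_le ha with ha' | ha'
  · have hb1 : b = 1 := by linarith
    simpa [← ha', hb1] using hr
  · rcases eq_or_lt_of_le hb with hb' | hb'
    · have ha1 : a = 1 := by linarith
      simpa [← hb', ha1] using hq
    · rcases hq with hq | ⟨hq0, hq1⟩ <;> rcases hr with hr | ⟨hr0, hr1⟩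
      · exact Or.inl (jung_aux_combo ha hb hab hq hr)
      · left; rw [hr0]
        have h1 : a * q 0 < a * p 0 := mul_lt_mul_of_pos_left hq ha'
        linarith
      · left; rw [hq0]
        have h1 : b * r 0 < b * p 0 := mul_lt_mul_of_pos_left hr hb'
        linarith
      · right
        refine ⟨by rw [hq0, hr0]; linarith, jung_aux_combo ha hb hab hq1 hr1⟩

/-- Colourful Jung-type lemma: if `μ` has the Jung property for the
origin-symmetric compact convex planar set `K` (every set of `K`-Minkowski
diameter at most 2 lies in a translate of `μ • K`) and `X₁, X₂, X₃` are
nonempty finite sets any two of whose points from different sets are at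
Minkowski distance at most 2, then some `X_m` lies in a single translate of
`μ • K`. -/
theorem jung_colourful
    (K : Set (EuclideanSpace ℝ (Fin 2)))
    (hKne : K.Nonempty) (hKcpt : IsCompact K) (hKconv : Convex ℝ K)
    (hKsym : K = -K)
    (μ : ℝ) (hμ : 0 ≤ μ)
    (hJung : ∀ S : Set (EuclideanSpace ℝ (Fin 2)),
      (∀ s ∈ S, ∀ s' ∈ S, s - s' ∈ (2 : ℝ) • K) →
      ∃ z : EuclideanSpace ℝ (Fin 2), S ⊆ {z} + μ • K)
    (X : Fin 3 → Finset (EuclideanSpace ℝ (Fin 2)))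
    (hXne : ∀ i, (X i).Nonempty)
    (hdist : ∀ i j, i ≠ j → ∀ x ∈ X i, ∀ y ∈ X j, x - y ∈ (2 : ℝ) • K) :
    ∃ m : Fin 3, ∃ z : EuclideanSpace ℝ (Fin 2),
      (X m : Set (EuclideanSpace ℝ (Fin 2))) ⊆ {z} + μ • K := by
  classical
  -- `0 ∈ K`
  obtain ⟨k₀, hk₀⟩ := hKne
  have hk₀' : -k₀ ∈ K := by rw [hKsym]; exact Set.neg_mem_neg.mpr hk₀
  have hK0 : (0 : EuclideanSpace ℝ (Fin 2)) ∈ K := by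
    have h := hKconv hk₀ hk₀' (by norm_num : (0:ℝ) ≤ 1/2) (by norm_num : (0:ℝ) ≤ 1/2)
      (by norm_num)
    simpa using h
  set C : Set E2 := μ • K with hC
  have hCcpt : IsCompact C := hKcpt.smul μ
  have hCconv : Convex ℝ C := hKconv.smul μ
  have hCsym : ∀ v ∈ C, -v ∈ C := by
    rintro v ⟨k, hk, rfl⟩
    exact ⟨-k, by rw [hKsym]; exact Set.neg_mem_neg.mpr hk, by simp⟩
  set B : E2 → Set E2 := fun x => {y | y - x ∈ C} with hB
  have hBconv : ∀ x, Convex ℝ (B x) := by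
    intro x y1 hy1 y2 hy2 a b ha hb hab
    show a • y1 + b • y2 - x ∈ C
    have hrw : a • (y1 - x) + b • (y2 - x) = a • y1 + b • y2 - (a + b) • x := by module
    rw [hab, one_smul] at hrw
    rw [← hrw]
    exact hCconv hy1 hy2 ha hb hab
  have hBcpt : ∀ x, IsCompact (B x) := by
    intro x
    have himg : B x = (fun c => c + x) '' C := by
      ext y
      simp only [hB, Set.mem_setOf_eq, Set.mem_image]
      constructor
      · intro h; exact ⟨y - x, h, by abel⟩
      · rintro ⟨c, hc, rfl⟩; simpa using hc
    rw [himg]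
    exact hCcpt.image (continuous_id.add continuous_const)
  -- every colourful triple of translates intersects, thanks to `hJung`
  have hP : ∀ g : Fin 3 → E2, (∀ i, g i ∈ X i) → (⋂ i, B (g i)).Nonempty := by
    intro g hg
    have hcond : ∀ s ∈ Set.range g, ∀ s' ∈ Set.range g, s - s' ∈ (2 : ℝ) • K := by
      rintro s ⟨i, rfl⟩ s' ⟨j, rfl⟩
      by_cases hij : i = j
      · subst hij
        simp only [sub_self]
        exact ⟨0, hK0, smul_zero 2⟩
      · exact hdist i j hij _ (hg i) _ (hg j)
    obtain ⟨z, hz⟩ := hJung (Set.range g) hcond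
    refine ⟨z, Set.mem_iInter.mpr fun i => ?_⟩
    have hmem : g i ∈ {z} + μ • K := hz ⟨i, rfl⟩
    rw [Set.singleton_add] at hmem
    obtain ⟨b, hb, hzb⟩ := hmem
    have hzb' : z + b = g i := hzb
    show z - g i ∈ C
    have hgzC : g i - z ∈ C := by
      have hgz : g i - z = b := by rw [← hzb']; abel
      rwa [hgz]
    have h2 := hCsym _ hgzC
    rwa [neg_sub] at h2
  have hPcpt : ∀ g : Fin 3 → E2, IsCompact (⋂ i, B (g i)) :=
    fun g => IsCompact.of_isClosed_subset (hBcpt (g 0))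
      (isClosed_iInter fun i => (hBcpt (g i)).isClosed) (Set.iInter_subset _ 0)
  have hMin : ∀ g : Fin 3 → E2, (∀ i, g i ∈ X i) →
      ∃ p, p ∈ (⋂ i, B (g i)) ∧ ∀ q ∈ (⋂ i, B (g i)), jphi p ≤ jphi q := by
    intro g hg
    obtain ⟨p, hp1, hp2⟩ := jung_exists_min _ (hPcpt g) (hP g hg)
    exact ⟨p, hp1, hp2⟩
  set sel : (Fin 3 → E2) → E2 := fun g =>
    if h : ∀ i, g i ∈ X i then (hMin g h).choose else 0 with hseldef
  have hsel₁ : ∀ g (h : ∀ i, g i ∈ X i), sel g ∈ ⋂ i, B (g i) := by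
    intro g h
    simp only [hseldef, dif_pos h]
    exact (hMin g h).choose_spec.1
  have hsel₂ : ∀ g (h : ∀ i, g i ∈ X i), ∀ q ∈ (⋂ i, B (g i)), jphi (sel g) ≤ jphi q := by
    intro g h
    simp only [hseldef, dif_pos h]
    exact (hMin g h).choose_spec.2
  set T : Finset (Fin 3 → E2) := Fintype.piFinset X with hT
  have hTne : T.Nonempty := by
    refine ⟨fun i => (hXne i).choose, ?_⟩
    rw [hT, Fintype.mem_piFinset]
    exact fun i => (hXne i).choose_spec
  obtain ⟨g₀, hg₀T, hmax⟩ := T.exists_max_image (fun g => jphi (sel g)) hTne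
  have hg₀ : ∀ i, g₀ i ∈ X i := Fintype.mem_piFinset.mp hg₀T
  set p := sel g₀ with hpdef
  have hpmem : p ∈ ⋂ i, B (g₀ i) := hsel₁ g₀ hg₀
  have hpmin := hsel₂ g₀ hg₀
  set L : Set E2 := {q | jphi q < jphi p} with hL
  set F : Option (Fin 3) → Set E2 := fun o => o.elim L (fun i => B (g₀ i)) with hF
  have hFconv : ∀ o : Option (Fin 3), Convex ℝ (F o) := by
    rintro (_ | i)
    · exact jung_convex_lt p
    · exact hBconv _
  have hempty : ¬ (⋂ o ∈ (Finset.univ : Finset (Option (Fin 3))), F o).Nonempty := by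
    rintro ⟨q, hq⟩
    rw [Set.mem_iInter₂] at hq
    have hqL : jphi q < jphi p := hq none (Finset.mem_univ none)
    have hqB : q ∈ ⋂ i, B (g₀ i) :=
      Set.mem_iInter.mpr fun i => hq (some i) (Finset.mem_univ _)
    exact absurd (hpmin q hqB) (not_le.mpr hqL)
  have hH : ¬ ∀ I ⊆ (Finset.univ : Finset (Option (Fin 3))),
      I.card ≤ Module.finrank ℝ E2 + 1 → (⋂ i ∈ I, F i).Nonempty := by
    intro h
    exact hempty (Convex.helly_theorem' (fun i _ => hFconv i) h)
  push_neg at hH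
  obtain ⟨I, hIsub, hIcard, hIempty⟩ := hH
  rw [finrank_euclideanSpace_fin] at hIcard
  have hnone : none ∈ I := by
    by_contra hn
    refine absurd hIempty (Set.Nonempty.ne_empty ⟨p, Set.mem_iInter₂.mpr ?_⟩)
    rintro (_ | i) hi
    · exact absurd hi hn
    · exact Set.mem_iInter.mp hpmem i
  have hm : ∃ m : Fin 3, some m ∉ I := by
    by_contra hc
    push_neg at hc
    have huniv : (Finset.univ : Finset (Option (Fin 3))) ⊆ I := by
      intro o _
      cases o with
      | none => exact hnone
      | some i => exact hc i
    have h4 : (4 : ℕ) ≤ I.card := by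
      have := Finset.card_le_card huniv
      simpa using this
    omega
  obtain ⟨m, hmI⟩ := hm
  refine ⟨m, p, ?_⟩
  intro y hy
  have hyX : y ∈ X m := hy
  set g' : Fin 3 → E2 := Function.update g₀ m y with hg'def
  have hg' : ∀ i, g' i ∈ X i := by
    intro i
    by_cases him : i = m
    · subst him; rw [hg'def, Function.update_self]; exact hyX
    · rw [hg'def, Function.update_of_ne him]; exact hg₀ i
  have hg'T : g' ∈ T := Fintype.mem_piFinset.mpr hg'
  have hq := hsel₁ g' hg'
  have hqle : jphi (sel g') ≤ jphi p := hmax g' hg'T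
  have hqnotL : ¬ jphi (sel g') < jphi p := by
    intro hqL
    refine absurd hIempty (Set.Nonempty.ne_empty ⟨sel g', Set.mem_iInter₂.mpr ?_⟩)
    rintro (_ | i) hi
    · exact hqL
    · have him : i ≠ m := fun h => hmI (h ▸ hi)
      have hmem : sel g' ∈ B (g' i) := Set.mem_iInter.mp hq i
      rwa [hg'def, Function.update_of_ne him] at hmem
  have hqp : sel g' = p := jphi_inj (le_antisymm hqle (not_lt.mp hqnotL))
  have hpBy : p ∈ B y := by
    have hmem : sel g' ∈ B (g' m) := Set.mem_iInter.mp hq m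
    rwa [hqp, hg'def, Function.update_self] at hmem
  have hpy : p - y ∈ C := hpBy
  have hyp : y - p ∈ C := by
    have := hCsym _ hpy
    rwa [neg_sub] at this
  have hmem : p + (y - p) ∈ {p} + C := Set.add_mem_add rfl hyp
  simpa using hmem
end

section
/- Let T ⊆ ℝ² be the closed regular triangle with vertices (0,0), (1,0), (1/2, √3/2), and let n₁ = (0,1), n₂ = (√3/2, 1/2), n₃ = (−√3/2, 1/2) be the three unit vectors orthogonal to its sides. Let X be a nonempty finite subset of ℝ² and for j = 1,2,3 let h_j = sup{⟨n_j, x − y⟩ : x, y ∈ X} be the width of X in the direction of the j-th side. Suppose that at least two of the three numbers h₁, h₂, h₃ are at most √3/2 and that h₁ + h₂ + h₃ ≤ 3√3/2. Then X can be covered by three translates of T, i.e., there exist t₁, t₂, t₃ ∈ ℝ² with X ⊆ (T + t₁) ∪ (T + t₂) ∪ (T + t₃). -/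
open Pointwise

/-- If a nonempty finite planar set `X` has widths `h₁, h₂, h₃` in the three
directions of the sides of the regular unit triangle `T`, at least two of the
widths are at most `√3/2`, and `h₁ + h₂ + h₃ ≤ 3√3/2`, then `X` can be
covered by three translates of `T`. -/
theorem cover_by_three_triangles
    (T : Set (EuclideanSpace ℝ (Fin 2)))
    (hT : T = convexHull ℝ
      {(!₂[0, 0] : EuclideanSpace ℝ (Fin 2)), (!₂[1, 0] : EuclideanSpace ℝ (Fin 2)),
        (!₂[1 / 2, Real.sqrt 3 / 2] : EuclideanSpace ℝ (Fin 2))})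
    (n : Fin 3 → EuclideanSpace ℝ (Fin 2))
    (hn : n = ![(!₂[0, 1] : EuclideanSpace ℝ (Fin 2)),
      (!₂[Real.sqrt 3 / 2, 1 / 2] : EuclideanSpace ℝ (Fin 2)),
      (!₂[-(Real.sqrt 3) / 2, 1 / 2] : EuclideanSpace ℝ (Fin 2))])
    (X : Finset (EuclideanSpace ℝ (Fin 2))) (hX : X.Nonempty)
    (h : Fin 3 → ℝ)
    (hdef : ∀ j, h j = sSup {r : ℝ | ∃ x ∈ X, ∃ y ∈ X, r = (inner ℝ (n j) (x - y) : ℝ)})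
    (htwo : ∃ j j' : Fin 3, j ≠ j' ∧ h j ≤ Real.sqrt 3 / 2 ∧ h j' ≤ Real.sqrt 3 / 2)
    (hsum : h 0 + h 1 + h 2 ≤ 3 * Real.sqrt 3 / 2) :
    ∃ t₁ t₂ t₃ : EuclideanSpace ℝ (Fin 2),
      (X : Set (EuclideanSpace ℝ (Fin 2))) ⊆ (T + {t₁}) ∪ (T + {t₂}) ∪ (T + {t₃}) := by
  clear htwo
  have h3pos : (0:ℝ) < Real.sqrt 3 := Real.sqrt_pos.mpr (by norm_num)
  have h3ne : (Real.sqrt 3 : ℝ) ≠ 0 := h3pos.ne'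
  have h33 : Real.sqrt 3 * Real.sqrt 3 = 3 := Real.mul_self_sqrt (by norm_num)
  set v0 : EuclideanSpace ℝ (Fin 2) := !₂[0, 0] with hv0
  set v1 : EuclideanSpace ℝ (Fin 2) := !₂[1, 0] with hv1
  set v2 : EuclideanSpace ℝ (Fin 2) := !₂[1 / 2, Real.sqrt 3 / 2] with hv2
  set s : ℝ := Real.sqrt 3 / 2 with hs
  -- coordinate functions
  set g1 : EuclideanSpace ℝ (Fin 2) → ℝ := fun y => y 1 with hg1
  set g2 : EuclideanSpace ℝ (Fin 2) → ℝ := fun y => s * y 0 + y 1 / 2 with hg2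
  set g3 : EuclideanSpace ℝ (Fin 2) → ℝ := fun y => -s * y 0 + y 1 / 2 with hg3
  -- inner product formulas
  have hin1 : ∀ y : EuclideanSpace ℝ (Fin 2), (inner ℝ (n 0) y : ℝ) = g1 y := by
    intro y
    simp [hn, PiLp.inner_apply, Fin.sum_univ_two, hg1]
  have hin2 : ∀ y : EuclideanSpace ℝ (Fin 2), (inner ℝ (n 1) y : ℝ) = g2 y := by
    intro y
    simp [hn, PiLp.inner_apply, Fin.sum_univ_two, hg2, hs]
    ring
  have hin3 : ∀ y : EuclideanSpace ℝ (Fin 2), (inner ℝ (n 2) y : ℝ) = g3 y := by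
    intro y
    simp [hn, PiLp.inner_apply, Fin.sum_univ_two, hg3, hs]
    ring
  -- width upper bounds
  have F : ∀ (j : Fin 3) (g : EuclideanSpace ℝ (Fin 2) → ℝ),
      (∀ y, (inner ℝ (n j) y : ℝ) = g y) →
      ∀ x ∈ X, ∀ y ∈ X, g x - g y ≤ h j := by
    intro j g hg x hx y hy
    obtain ⟨u, huX, hu⟩ := X.exists_max_image g hX
    obtain ⟨v, hvX, hv⟩ := X.exists_min_image g hX
    have hglin : ∀ a b : EuclideanSpace ℝ (Fin 2), (inner ℝ (n j) (a - b) : ℝ) = g a - g b := by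
      intro a b
      rw [inner_sub_right, hg, hg]
    have hmem : g x - g y ∈ {r : ℝ | ∃ x ∈ X, ∃ y ∈ X, r = (inner ℝ (n j) (x - y) : ℝ)} :=
      ⟨x, hx, y, hy, (hglin x y).symm⟩
    have hbdd : BddAbove {r : ℝ | ∃ x ∈ X, ∃ y ∈ X, r = (inner ℝ (n j) (x - y) : ℝ)} := by
      refine ⟨g u - g v, ?_⟩
      rintro r ⟨p, hp, q, hq, rfl⟩
      rw [hglin]
      exact sub_le_sub (hu p hp) (hv q hq)
    calc g x - g y ≤ sSup {r : ℝ | ∃ x ∈ X, ∃ y ∈ X, r = (inner ℝ (n j) (x - y) : ℝ)} :=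
          le_csSup hbdd hmem
      _ = h j := (hdef j).symm
  have F1 := F 0 g1 hin1
  have F2 := F 1 g2 hin2
  have F3 := F 2 g3 hin3
  clear F hdef hin1 hin2 hin3 hn
  -- extremizers
  obtain ⟨p1, hp1X, hp1⟩ := X.exists_min_image g1 hX
  obtain ⟨p2, hp2X, hp2⟩ := X.exists_max_image g2 hX
  obtain ⟨p3, hp3X, hp3⟩ := X.exists_max_image g3 hX
  obtain ⟨m1, hm1⟩ : ∃ r : ℝ, r = g1 p1 := ⟨_, rfl⟩
  obtain ⟨M2, hM2⟩ : ∃ r : ℝ, r = g2 p2 := ⟨_, rfl⟩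
  obtain ⟨M3, hM3⟩ : ∃ r : ℝ, r = g3 p3 := ⟨_, rfl⟩
  obtain ⟨D, hD⟩ : ∃ r : ℝ, r = M2 + M3 - m1 := ⟨_, rfl⟩
  obtain ⟨tt, htt⟩ : ∃ r : ℝ, r = (D + h 0) / 2 - s := ⟨_, rfl⟩
  rw [← hm1] at hp1
  rw [← hM2] at hp2
  rw [← hM3] at hp3
  -- membership lemma for T
  have hmemT : ∀ p : EuclideanSpace ℝ (Fin 2), 0 ≤ p 1 → s * p 0 + p 1 / 2 ≤ s →
      -s * p 0 + p 1 / 2 ≤ 0 → p ∈ T := by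
    intro p hp1' hp2' hp3'
    rw [hT]
    set c1 : ℝ := p 0 - p 1 / Real.sqrt 3 with hc1def
    set c2 : ℝ := 2 * p 1 / Real.sqrt 3 with hc2def
    set c0 : ℝ := 1 - c1 - c2 with hc0def
    have hc2 : 0 ≤ c2 := by positivity
    have hc1 : 0 ≤ c1 := by
      rw [hc1def, sub_nonneg, div_le_iff₀ h3pos]
      rw [hs] at hp3'
      nlinarith [hp3']
    have hc0 : 0 ≤ c0 := by
      have key : p 1 / Real.sqrt 3 ≤ 1 - p 0 := by
        rw [div_le_iff₀ h3pos]
        rw [hs] at hp2'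
        nlinarith [hp2']
      rw [hc0def, hc1def, hc2def]
      have e2 : 2 * p 1 / Real.sqrt 3 = 2 * (p 1 / Real.sqrt 3) := by ring
      rw [e2]
      linarith [key]
    have hw0 : ∀ i ∈ (Finset.univ : Finset (Fin 3)), 0 ≤ (![c0, c1, c2] : Fin 3 → ℝ) i := by
      intro i _
      fin_cases i
      · simpa using hc0
      · simpa using hc1
      · simpa using hc2
    have hsum1 : ∑ i : Fin 3, (![c0, c1, c2] : Fin 3 → ℝ) i = 1 := by
      rw [Fin.sum_univ_three]
      simp only [Matrix.cons_val_zero, Matrix.cons_val_one, Matrix.head_cons,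
        Matrix.cons_val_two, Matrix.tail_cons]
      rw [hc0def]
      ring
    have hz : ∀ i ∈ (Finset.univ : Finset (Fin 3)),
        (![v0, v1, v2] : Fin 3 → EuclideanSpace ℝ (Fin 2)) i ∈ ({v0, v1, v2} : Set (EuclideanSpace ℝ (Fin 2))) := by
      intro i _
      fin_cases i <;> simp
    have hcm : (Finset.univ : Finset (Fin 3)).centerMass ![c0, c1, c2] ![v0, v1, v2]
        ∈ convexHull ℝ ({v0, v1, v2} : Set (EuclideanSpace ℝ (Fin 2))) :=
      Finset.centerMass_mem_convexHull _ hw0 (by rw [hsum1]; norm_num) hz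
    have hcmeq : (Finset.univ : Finset (Fin 3)).centerMass ![c0, c1, c2] ![v0, v1, v2] = p := by
      rw [Finset.centerMass_eq_of_sum_1 _ _ hsum1, Fin.sum_univ_three]
      ext i
      fin_cases i
      · simp only [Matrix.cons_val_zero, Matrix.cons_val_one, Matrix.head_cons,
          Matrix.cons_val_two, Matrix.tail_cons, PiLp.add_apply, PiLp.smul_apply,
          hv0, hv1, hv2, smul_eq_mul, Fin.zero_eta, Fin.mk_one, hs]
        rw [hc1def, hc2def]
        field_simp
        ring
      · simp only [Matrix.cons_val_zero, Matrix.cons_val_one, Matrix.head_cons,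
          Matrix.cons_val_two, Matrix.tail_cons, PiLp.add_apply, PiLp.smul_apply,
          hv0, hv1, hv2, smul_eq_mul, Fin.zero_eta, Fin.mk_one, hs]
        rw [hc2def]
        field_simp
        ring
    exact hcmeq ▸ hcm
  -- membership in translates
  have hdiv2 : ∀ r : ℝ, s * (r / Real.sqrt 3) = r / 2 := by
    intro r
    rw [hs]
    field_simp
  have hmemTrans : ∀ (u v : ℝ) (x : EuclideanSpace ℝ (Fin 2)),
      u + v ≤ g1 x → g2 x ≤ u + s → g3 x ≤ v →
      x ∈ T + {(!₂[(u - v) / Real.sqrt 3, u + v] : EuclideanSpace ℝ (Fin 2))} := by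
    intro u v x hx1 hx2 hx3
    set τ : EuclideanSpace ℝ (Fin 2) := !₂[(u - v) / Real.sqrt 3, u + v] with hτ
    rw [Set.mem_add]
    refine ⟨x - τ, ?_, τ, Set.mem_singleton _, sub_add_cancel _ _⟩
    have e0 : (x - τ) 0 = x 0 - (u - v) / Real.sqrt 3 := by
      rw [hτ]; simp
    have e1 : (x - τ) 1 = x 1 - (u + v) := by
      rw [hτ]; simp
    have hq := hdiv2 (u - v)
    simp only [hg1] at hx1
    simp only [hg2] at hx2
    simp only [hg3] at hx3
    apply hmemT
    · rw [e1]; linarith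
    · rw [e0, e1]
      have expand : s * (x 0 - (u - v) / Real.sqrt 3) + (x 1 - (u + v)) / 2
          = (s * x 0 + x 1 / 2) - s * ((u - v) / Real.sqrt 3) - (u + v) / 2 := by ring
      rw [expand, hq]
      linarith
    · rw [e0, e1]
      have expand : -s * (x 0 - (u - v) / Real.sqrt 3) + (x 1 - (u + v)) / 2
          = (-s * x 0 + x 1 / 2) + s * ((u - v) / Real.sqrt 3) - (u + v) / 2 := by ring
      rw [expand, hq]
      linarith
  -- the three translation vectors
  refine ⟨!₂[(M2 - D + tt + h 2 - s - (M3 - D + tt + h 1)) / Real.sqrt 3,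
             (M2 - D + tt + h 2 - s) + (M3 - D + tt + h 1)],
          !₂[(M2 - D + tt - M3) / Real.sqrt 3, (M2 - D + tt) + M3],
          !₂[(M2 - s - (M3 - D + s + tt)) / Real.sqrt 3, (M2 - s) + (M3 - D + s + tt)], ?_⟩
  intro x hx
  have hx' : x ∈ X := hx
  have f1 := hp1 x hx'
  have f2 := hp2 x hx'
  have f3 := hp3 x hx'
  have f4 := F1 x hx' p1 hp1X
  have f5 := F2 p2 hp2X x hx'
  have f6 := F3 p3 hp3X x hx'
  have f7 : g1 x = g2 x + g3 x := by
    simp only [hg1, hg2, hg3]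
    ring
  rw [← hm1] at f4
  rw [← hM2] at f5
  rw [← hM3] at f6
  have harith : m1 + (h 0 + h 1 + h 2) - 3 * s ≤ m1 := by
    rw [hs]; linarith [hsum]
  by_cases hcase : g1 x ≤ m1 + tt
  · refine Or.inl (Or.inl ?_)
    apply hmemTrans (M2 - D + tt + h 2 - s) (M3 - D + tt + h 1) x
    · linarith [htt, hD, harith, f1]
    · linarith [htt, hD, f6, f7]
    · linarith [htt, hD, f5, f7]
  · push_neg at hcase
    by_cases hcase2 : g2 x ≤ M2 - D + s + tt
    · refine Or.inl (Or.inr ?_)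
      apply hmemTrans (M2 - D + tt) M3 x
      · linarith [htt, hD]
      · linarith [hcase2]
      · linarith [f3]
    · push_neg at hcase2
      refine Or.inr ?_
      apply hmemTrans (M2 - s) (M3 - D + s + tt) x
      · linarith [htt, hD]
      · linarith [f2]
      · linarith [htt, hD, f4, f7, hcase2]
end

section
/- Let k ≥ 3 and let P₁, P₂, …, P_k be nonempty compact subsets of the Euclidean plane ℝ² such that ‖p − q‖ ≤ 1 for every p ∈ P_i and q ∈ P_j with i ≠ j. Then there exists i ∈ {1, …, k} such that P_i is contained in a closed Euclidean ball of radius 1/√3 (i.e., of diameter 2/√3). -/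
open Metric Set
open scoped RealInnerProductSpace

noncomputable section SmallDiameter

local notation "Pt" => EuclideanSpace ℝ (Fin 2)

def lexLe (z w : Pt) : Prop := z 0 < w 0 ∨ (z 0 = w 0 ∧ z 1 ≤ w 1)

def lexNeg (d : Pt) : Prop := d 0 < 0 ∨ (d 0 = 0 ∧ d 1 < 0)

lemma lexLe_refl (z : Pt) : lexLe z z := Or.inr ⟨rfl, le_rfl⟩

lemma pt_ext {z w : Pt} (h0 : z 0 = w 0) (h1 : z 1 = w 1) : z = w := by
  ext i
  fin_cases i <;> assumption

lemma lexLe_antisymm {z w : Pt} (h : lexLe z w) (h' : lexLe w z) : z = w := by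
  rcases h with h | ⟨h0, h1⟩
  · rcases h' with h' | ⟨h0', h1'⟩
    · linarith
    · linarith [h0'.ge]
  · rcases h' with h' | ⟨h0', h1'⟩
    · exfalso; rw [h0] at h'; exact lt_irrefl _ h'
    · exact pt_ext h0 (le_antisymm h1 h1')

lemma lexNeg_sub {a b : Pt} (h : lexLe a b) (hne : a ≠ b) : lexNeg (a - b) := by
  rcases h with h | ⟨h0, h1⟩
  · left; simp only [PiLp.sub_apply]; linarith
  · right
    constructor
    · simp only [PiLp.sub_apply]; linarith [h0.le, h0.ge]
    · simp only [PiLp.sub_apply]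
      rcases lt_or_eq_of_le h1 with h1 | h1
      · linarith
      · exact absurd (pt_ext h0 h1) hne

lemma lexNeg_move {d : Pt} (hd : lexNeg d) {t : ℝ} (ht : 0 < t) (x : Pt) :
    ¬ lexLe x (x + t • d) := by
  rcases hd with h | ⟨h0, h1⟩
  · intro hc
    rcases hc with hc | ⟨hc0, _⟩
    · simp only [PiLp.add_apply, PiLp.smul_apply, smul_eq_mul] at hc
      nlinarith
    · simp only [PiLp.add_apply, PiLp.smul_apply, smul_eq_mul] at hc0
      nlinarith
  · intro hc
    rcases hc with hc | ⟨_, hc1⟩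
    · simp only [PiLp.add_apply, PiLp.smul_apply, smul_eq_mul, h0] at hc
      nlinarith
    · simp only [PiLp.add_apply, PiLp.smul_apply, smul_eq_mul] at hc1
      nlinarith

def cross (u v : Pt) : ℝ := u 0 * v 1 - u 1 * v 0

lemma cross_swap (u v : Pt) : cross u v = - cross v u := by simp only [cross]; ring

/-- 2-D Cramer identity -/
lemma cramer (x y z : Pt) : cross x z • y = cross y z • x + cross x y • z := by
  apply pt_ext <;>
    · simp only [cross, PiLp.smul_apply, PiLp.add_apply, smul_eq_mul]
      ring

lemma cross_smul_right (u v : Pt) (t : ℝ) : cross u (t • v) = t * cross u v := by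
  simp only [cross, PiLp.smul_apply, smul_eq_mul]; ring

lemma cross_eq_zero_parallel {x z : Pt} (hx : lexNeg x) (hz : lexNeg z)
    (h : cross x z = 0) : ∃ t : ℝ, 0 < t ∧ z = t • x := by
  simp only [cross] at h
  rcases hx with hx0 | ⟨hx0, hx1⟩
  · have hxne : x 0 ≠ 0 := ne_of_lt hx0
    rcases hz with hz0 | ⟨hz0, hz1⟩
    · refine ⟨z 0 / x 0, div_pos_iff.mpr (Or.inr ⟨hz0, hx0⟩), ?_⟩
      apply pt_ext
      · simp only [PiLp.smul_apply, smul_eq_mul]; field_simp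
      · simp only [PiLp.smul_apply, smul_eq_mul]; field_simp; linarith
    · exfalso; rw [hz0] at h; nlinarith
  · have hxne : x 1 ≠ 0 := ne_of_lt hx1
    rcases hz with hz0 | ⟨hz0, hz1⟩
    · exfalso; rw [hx0] at h; nlinarith
    · refine ⟨z 1 / x 1, div_pos_iff.mpr (Or.inr ⟨hz1, hx1⟩), ?_⟩
      apply pt_ext
      · simp only [PiLp.smul_apply, smul_eq_mul, hz0, hx0]; ring
      · simp only [PiLp.smul_apply, smul_eq_mul]; field_simp


-- new material:
lemma lexNeg_coord0 {d : Pt} (h : lexNeg d) : d 0 ≤ 0 := by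
  rcases h with h | ⟨h, _⟩ <;> linarith

lemma cross_trans {x y z : Pt} (hx : lexNeg x) (hy : lexNeg y) (hz : lexNeg z)
    (hxy : 0 ≤ cross x y) (hyz : 0 ≤ cross y z) : 0 ≤ cross x z := by
  by_contra hneg
  push_neg at hneg
  have hid := cramer x y z
  have h0 : cross x z * y 0 = cross y z * x 0 + cross x y * z 0 := by
    have := congrArg (fun v : Pt => v 0) hid
    simpa [PiLp.smul_apply, PiLp.add_apply, smul_eq_mul] using this
  -- LHS ≥ 0, RHS ≤ 0, so each term is 0
  have hy0 : 0 ≤ cross x z * y 0 := by nlinarith [lexNeg_coord0 hy]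
  have hr1 : cross y z * x 0 ≤ 0 := mul_nonpos_of_nonneg_of_nonpos hyz (lexNeg_coord0 hx)
  have hr2 : cross x y * z 0 ≤ 0 := mul_nonpos_of_nonneg_of_nonpos hxy (lexNeg_coord0 hz)
  have e1 : cross y z * x 0 = 0 := by linarith
  have e2 : cross x y * z 0 = 0 := by linarith
  have ey0 : cross x z * y 0 = 0 := by linarith
  have hy00 : y 0 = 0 := by
    rcases mul_eq_zero.mp ey0 with h | h
    · exact absurd h (ne_of_lt hneg)
    · exact h
  rcases mul_eq_zero.mp e1 with hyz0 | hx00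
  · -- cross y z = 0 : z parallel to y
    obtain ⟨t, ht, hzy⟩ := cross_eq_zero_parallel hy hz hyz0
    rw [hzy, cross_smul_right] at hneg
    nlinarith
  · rcases mul_eq_zero.mp e2 with hxy0 | hz00
    · -- cross x y = 0 : y parallel to x
      obtain ⟨t, ht, hyx⟩ := cross_eq_zero_parallel hx hy hxy0
      rw [hyx] at hyz
      have : cross (t • x) z = t * cross x z := by
        simp only [cross, PiLp.smul_apply, smul_eq_mul]; ring
      rw [this] at hyz
      nlinarith
    · -- x 0 = 0, y 0 = 0, z 0 = 0 : cross x z = 0, contradiction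
      have : cross x z = 0 := by simp [cross, hx00, hz00]
      linarith

lemma between {x y z : Pt} (hx : lexNeg x) (hy : lexNeg y) (hz : lexNeg z)
    (hxy : 0 ≤ cross x y) (hyz : 0 ≤ cross y z) :
    ∃ s t : ℝ, 0 ≤ s ∧ 0 ≤ t ∧ y = s • x + t • z := by
  have hxz : 0 ≤ cross x z := cross_trans hx hy hz hxy hyz
  rcases eq_or_lt_of_le hxz with hxz0 | hxzpos
  · -- x ∥ z
    obtain ⟨t, ht, hzx⟩ := cross_eq_zero_parallel hx hz hxz0.symm
    have : cross x y = 0 := by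
      have h1 : cross y z = t * cross y x := by rw [hzx, cross_smul_right]
      have h2 : cross y x = - cross x y := by simp only [cross]; ring
      nlinarith [hyz, h1, h2]
    obtain ⟨s, hs, hyx⟩ := cross_eq_zero_parallel hx hy this
    exact ⟨s, 0, hs.le, le_rfl, by rw [hyx]; simp⟩
  · refine ⟨cross y z / cross x z, cross x y / cross x z,
      div_nonneg hyz hxzpos.le, div_nonneg hxy hxzpos.le, ?_⟩
    have hid := cramer x y z
    have hne : cross x z ≠ 0 := ne_of_gt hxzpos
    calc y = (cross x z)⁻¹ • (cross x z • y) := by rw [smul_smul, inv_mul_cancel₀ hne, one_smul]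
    _ = (cross x z)⁻¹ • (cross y z • x + cross x y • z) := by rw [hid]
    _ = (cross y z / cross x z) • x + (cross x y / cross x z) • z := by
        rw [smul_add, smul_smul, smul_smul]
        congr 1 <;> congr 1 <;> field_simp

lemma median {d₁ d₂ d₃ : Pt} (h₁ : lexNeg d₁) (h₂ : lexNeg d₂) (h₃ : lexNeg d₃) :
    (∃ s t : ℝ, 0 ≤ s ∧ 0 ≤ t ∧ d₁ = s • d₂ + t • d₃) ∨
    (∃ s t : ℝ, 0 ≤ s ∧ 0 ≤ t ∧ d₂ = s • d₁ + t • d₃) ∨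
    (∃ s t : ℝ, 0 ≤ s ∧ 0 ≤ t ∧ d₃ = s • d₁ + t • d₂) := by
  have swap : ∀ u v : Pt, cross u v = - cross v u := by
    intro u v; simp only [cross]; ring
  rcases le_or_gt 0 (cross d₁ d₂) with c12 | c12
  · rcases le_or_gt 0 (cross d₂ d₃) with c23 | c23
    · exact Or.inr (Or.inl (between h₁ h₂ h₃ c12 c23))
    · rcases le_or_gt 0 (cross d₁ d₃) with c13 | c13
      · -- chain d₁ ≼ d₃ ≼ d₂
        have c32 : 0 ≤ cross d₃ d₂ := by rw [swap]; linarith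
        exact Or.inr (Or.inr (between h₁ h₃ h₂ c13 c32))
      · -- chain d₃ ≼ d₁ ≼ d₂
        have c31 : 0 ≤ cross d₃ d₁ := by rw [swap]; linarith
        obtain ⟨s, t, hs, ht, he⟩ := between h₃ h₁ h₂ c31 c12
        exact Or.inl ⟨t, s, ht, hs, by rw [he, add_comm]⟩
  · rcases le_or_gt 0 (cross d₁ d₃) with c13 | c13
    · -- chain d₂ ≼ d₁ ≼ d₃
      have c21 : 0 ≤ cross d₂ d₁ := by rw [swap]; linarith
      exact Or.inl (between h₂ h₁ h₃ c21 c13)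
    · rcases le_or_gt 0 (cross d₂ d₃) with c23 | c23
      · -- chain d₂ ≼ d₃ ≼ d₁
        have c31 : 0 ≤ cross d₃ d₁ := by rw [swap]; linarith
        obtain ⟨s, t, hs, ht, he⟩ := between h₂ h₃ h₁ c23 c31
        exact Or.inr (Or.inr ⟨t, s, ht, hs, by rw [he, add_comm]⟩)
      · -- chain d₃ ≼ d₂ ≼ d₁
        have c32 : 0 ≤ cross d₃ d₂ := by rw [swap]; linarith
        have c21 : 0 ≤ cross d₂ d₁ := by rw [swap]; linarith
        obtain ⟨s, t, hs, ht, he⟩ := between h₃ h₂ h₁ c32 c21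
        exact Or.inr (Or.inl ⟨t, s, ht, hs, by rw [he, add_comm]⟩)

-- coordinate continuity
lemma coord_continuous (i : Fin 2) : Continuous (fun z : Pt => z i) := by
  have h := (PiLp.continuousLinearEquiv 2 ℝ (fun _ : Fin 2 => ℝ)).continuous
  exact (continuous_apply i).comp h

lemma exists_lexmin {S : Set Pt} (hS : IsCompact S) (hne : S.Nonempty) :
    ∃ z ∈ S, ∀ w ∈ S, lexLe z w := by
  obtain ⟨z₁, hz₁S, hz₁min⟩ := hS.exists_isMinOn hne (coord_continuous 0).continuousOn
  have hTclosed : IsClosed {w : Pt | w 0 = z₁ 0} :=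
    isClosed_eq (coord_continuous 0) continuous_const
  have hT : IsCompact (S ∩ {w : Pt | w 0 = z₁ 0}) := hS.inter_right hTclosed
  obtain ⟨z, hzT, hzmin⟩ := hT.exists_isMinOn ⟨z₁, hz₁S, rfl⟩
    (coord_continuous 1).continuousOn
  refine ⟨z, hzT.1, fun w hw => ?_⟩
  rcases lt_or_eq_of_le (isMinOn_iff.mp hz₁min w hw) with h | h
  · left; rw [hzT.2]; exact h
  · right
    constructor
    · rw [hzT.2, h]
    · exact hzmin ⟨hw, h.symm⟩

/-- Pinning lemma: the lex-min of a triple intersection of convex sets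
is already the lex-min of one of the three pairwise intersections. -/
lemma pinning {A B C : Set Pt} (hA : Convex ℝ A) (hB : Convex ℝ B) (hC : Convex ℝ C)
    {x₀ a b c : Pt}
    (hxA : x₀ ∈ A) (hxB : x₀ ∈ B) (hxC : x₀ ∈ C)
    (hxmin : ∀ w, w ∈ A → w ∈ B → w ∈ C → lexLe x₀ w)
    (haB : a ∈ B) (haC : a ∈ C) (hamin : ∀ w, w ∈ B → w ∈ C → lexLe a w)
    (hbA : b ∈ A) (hbC : b ∈ C) (hbmin : ∀ w, w ∈ A → w ∈ C → lexLe b w)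
    (hcA : c ∈ A) (hcB : c ∈ B) (hcmin : ∀ w, w ∈ A → w ∈ B → lexLe c w) :
    a = x₀ ∨ b = x₀ ∨ c = x₀ := by
  by_contra hcon
  push_neg at hcon
  obtain ⟨hane, hbne, hcne⟩ := hcon
  -- each pairwise min is strictly lex-below x₀ and avoids its missing set
  have haLe : lexLe a x₀ := hamin x₀ hxB hxC
  have hbLe : lexLe b x₀ := hbmin x₀ hxA hxC
  have hcLe : lexLe c x₀ := hcmin x₀ hxA hxB
  have da := lexNeg_sub haLe hane
  have db := lexNeg_sub hbLe hbne
  have dc := lexNeg_sub hcLe hcne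
  -- halfline exclusion: for t > 0, x₀ + t•(a - x₀) ∉ A, etc.
  have key : ∀ (X Y Z : Set Pt), Convex ℝ X → Convex ℝ Y → Convex ℝ Z →
      x₀ ∈ X → x₀ ∈ Y → x₀ ∈ Z →
      (∀ w, w ∈ X → w ∈ Y → w ∈ Z → lexLe x₀ w) →
      ∀ (p : Pt), p ∈ Y → p ∈ Z → (∀ w, w ∈ Y → w ∈ Z → lexLe p w) → p ≠ x₀ →
      ∀ t : ℝ, 0 < t → x₀ + t • (p - x₀) ∉ X := by
    intro X Y Z hX hY hZ hxX hxY hxZ hmin p hpY hpZ hpmin hpne t ht hmem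
    have hpLe : lexLe p x₀ := hpmin x₀ hxY hxZ
    have hpneg : lexNeg (p - x₀) := lexNeg_sub hpLe hpne
    have hpX : p ∉ X := by
      intro hpX
      exact (lexNeg_move hpneg one_pos x₀) (by
        have : x₀ + (1:ℝ) • (p - x₀) = p := by abel_nf; simp
        rw [this]
        exact hmin p hpX hpY hpZ)
    rcases le_or_gt t 1 with ht1 | ht1
    · -- the point is in Y ∩ Z by convexity, in X by hmem : beats x₀
      have hy : x₀ + t • (p - x₀) ∈ Y := by
        have := hY hxY hpY (a := 1 - t) (b := t) (by linarith) ht.le (by ring)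
        convert this using 1
        module
      have hz : x₀ + t • (p - x₀) ∈ Z := by
        have := hZ hxZ hpZ (a := 1 - t) (b := t) (by linarith) ht.le (by ring)
        convert this using 1
        module
      exact (lexNeg_move hpneg ht x₀) (hmin _ hmem hy hz)
    · -- p is a convex combination of x₀ and the far point, so p ∈ X
      apply hpX
      have hin := hX hxX hmem (a := 1 - 1/t) (b := 1/t)
        (by rw [sub_nonneg]; exact div_le_one_of_le₀ ht1.le (by linarith))
        (by positivity) (by ring)
      have htne : t ≠ 0 := by linarith
      have hp : (1 - 1/t) • x₀ + (1/t) • (x₀ + t • (p - x₀)) = p := by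
        match_scalars <;> (field_simp; try ring)
      rwa [hp] at hin
  have hka := key A B C hA hB hC hxA hxB hxC hxmin a haB haC hamin hane
  have hkb := key B A C hB hA hC hxB hxA hxC (fun w h1 h2 h3 => hxmin w h2 h1 h3)
    b hbA hbC hbmin hbne
  have hkc := key C A B hC hA hB hxC hxA hxB (fun w h1 h2 h3 => hxmin w h2 h3 h1)
    c hcA hcB hcmin hcne
  -- membership of the half-lines of the other two minima
  -- combo lemma
  have combo : ∀ (X : Set Pt), Convex ℝ X → x₀ ∈ X →
      ∀ (u v : Pt), u ∈ X → v ∈ X → ∀ s t : ℝ, 0 ≤ s → 0 ≤ t →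
      s • (u - x₀) + t • (v - x₀) ≠ 0 →
      ∃ τ : ℝ, 0 < τ ∧ x₀ + τ • (s • (u - x₀) + t • (v - x₀)) ∈ X := by
    intro X hX hxX u v huX hvX s t hs ht hne
    rcases eq_or_lt_of_le hs with hs0 | hs
    · rcases eq_or_lt_of_le ht with ht0 | ht
      · exfalso; apply hne; rw [← hs0, ← ht0]; simp
      · refine ⟨1/t, by positivity, ?_⟩
        have htne : t ≠ 0 := ne_of_gt ht
        have heq : x₀ + (1/t) • ((s:ℝ) • (u - x₀) + t • (v - x₀)) = v := by
          rw [← hs0]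
          match_scalars <;> (field_simp; try ring)
        rw [heq]; exact hvX
    · rcases eq_or_lt_of_le ht with ht0 | ht
      · refine ⟨1/s, by positivity, ?_⟩
        have hsne : s ≠ 0 := ne_of_gt hs
        have heq : x₀ + (1/s) • ((s:ℝ) • (u - x₀) + t • (v - x₀)) = u := by
          rw [← ht0]
          match_scalars <;> (field_simp; try ring)
        rw [heq]; exact huX
      · -- both positive : use midpoint of two convex combinations
        refine ⟨min (1/(2*s)) (1/(2*t)), by positivity, ?_⟩
        set τ := min (1/(2*s)) (1/(2*t)) with hτ
        have hτpos : 0 < τ := by positivity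
        have h2s : 2*τ*s ≤ 1 := by
          have : τ ≤ 1/(2*s) := min_le_left _ _
          calc 2*τ*s ≤ 2*(1/(2*s))*s := by nlinarith
          _ = 1 := by field_simp
        have h2t : 2*τ*t ≤ 1 := by
          have : τ ≤ 1/(2*t) := min_le_right _ _
          calc 2*τ*t ≤ 2*(1/(2*t))*t := by nlinarith
          _ = 1 := by field_simp
        have hu' : x₀ + (2*τ*s) • (u - x₀) ∈ X := by
          have := hX hxX huX (a := 1 - 2*τ*s) (b := 2*τ*s)
            (by linarith) (by positivity) (by ring)
          convert this using 1
          module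
        have hv' : x₀ + (2*τ*t) • (v - x₀) ∈ X := by
          have := hX hxX hvX (a := 1 - 2*τ*t) (b := 2*τ*t)
            (by linarith) (by positivity) (by ring)
          convert this using 1
          module
        have := hX hu' hv' (a := (1:ℝ)/2) (b := (1:ℝ)/2)
          (by norm_num) (by norm_num) (by norm_num)
        convert this using 1
        module
  -- apply median
  rcases median da db dc with ⟨s, t, hs, ht, he⟩ | ⟨s, t, hs, ht, he⟩ | ⟨s, t, hs, ht, he⟩
  · -- a - x₀ = s•(b-x₀) + t•(c-x₀), with b, c ∈ A
    have hne0 : s • (b - x₀) + t • (c - x₀) ≠ 0 := by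
      rw [← he]
      intro h
      apply hane
      have : a - x₀ = 0 := h
      have := sub_eq_zero.mp this
      exact this
    obtain ⟨τ, hτ, hmem⟩ := combo A hA hxA b c hbA hcA s t hs ht hne0
    rw [← he] at hmem
    exact hka τ hτ hmem
  · have hne0 : s • (a - x₀) + t • (c - x₀) ≠ 0 := by
      rw [← he]; intro h; exact hbne (sub_eq_zero.mp h)
    obtain ⟨τ, hτ, hmem⟩ := combo B hB hxB a c haB hcB s t hs ht hne0
    rw [← he] at hmem
    exact hkb τ hτ hmem
  · have hne0 : s • (a - x₀) + t • (b - x₀) ≠ 0 := by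
      rw [← he]; intro h; exact hcne (sub_eq_zero.mp h)
    obtain ⟨τ, hτ, hmem⟩ := combo C hC hxC a b haC hbC s t hs ht hne0
    rw [← he] at hmem
    exact hkc τ hτ hmem

lemma key_ineq (c x y : ℝ) (hc : 0 < c) (hx : 0 < x) (hy : 0 < y)
    (h1 : c + x ≤ 1) (h2 : c + y ≤ 1) (h3 : x + y ≤ 1) :
    3*(c+x)*(c+y)*(x+y) ≤ 4*(c*(x+y) + x*y) := by
  nlinarith [mul_pos hx hy, mul_pos hc hx, mul_pos hc hy, sq_nonneg (x-y),
    mul_nonneg (mul_nonneg hx.le hy.le) (sub_nonneg.2 h3),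
    mul_nonneg (mul_nonneg hc.le (add_pos hx hy).le) (sub_nonneg.2 h1),
    mul_nonneg (mul_nonneg hc.le (add_pos hx hy).le) (sub_nonneg.2 h2),
    mul_nonneg (mul_nonneg hc.le (add_pos hx hy).le) (sub_nonneg.2 h3),
    mul_nonneg (mul_nonneg hc.le hx.le) (sub_nonneg.2 h2),
    mul_nonneg (mul_nonneg hc.le hy.le) (sub_nonneg.2 h1)]

lemma sqrt3_le_two : Real.sqrt 3 ≤ 2 := by
  nlinarith [Real.sq_sqrt (by norm_num : (3:ℝ) ≥ 0), Real.sqrt_nonneg 3]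

lemma sqrt3_pos : (0:ℝ) < Real.sqrt 3 := Real.sqrt_pos.2 (by norm_num)

lemma norm_le_inv_sqrt3 {w : Pt} (h : ‖w‖^2 ≤ 1/3) : ‖w‖ ≤ 1 / Real.sqrt 3 := by
  rw [le_div_iff₀ sqrt3_pos]
  nlinarith [Real.sq_sqrt (by norm_num : (3:ℝ) ≥ 0), Real.sqrt_nonneg 3, norm_nonneg w]

lemma half_le_inv_sqrt3 : (1:ℝ)/2 ≤ 1 / Real.sqrt 3 := by
  rw [div_le_div_iff₀ (by norm_num) sqrt3_pos]
  linarith [sqrt3_le_two]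

set_option maxHeartbeats 1000000 in
/-- Jung's theorem for three points in the plane. -/
lemma jung3 {p q s : Pt} (hpq : ‖p - q‖ ≤ 1) (hps : ‖p - s‖ ≤ 1) (hqs : ‖q - s‖ ≤ 1) :
    ∃ z : Pt, ‖z - p‖ ≤ 1/Real.sqrt 3 ∧ ‖z - q‖ ≤ 1/Real.sqrt 3 ∧ ‖z - s‖ ≤ 1/Real.sqrt 3 := by
  -- general obtuse helper
  have obtuse : ∀ p' q' s' : Pt, ‖q' - s'‖ ≤ 1 → (⟪q' - p', s' - p'⟫ ≤ 0) →
      ∃ z : Pt, ‖z - p'‖ ≤ 1/2 ∧ ‖z - q'‖ ≤ 1/2 ∧ ‖z - s'‖ ≤ 1/2 := by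
    intro p' q' s' hqs' hinner
    set u := q' - p' with hu
    set v := s' - p' with hv
    refine ⟨p' + (1/2 : ℝ) • (u + v), ?_, ?_, ?_⟩
    · have h1 : p' + (1/2 : ℝ) • (u + v) - p' = (1/2 : ℝ) • (u + v) := by abel
      rw [h1, norm_smul]
      have huv : ‖u + v‖^2 ≤ 1 := by
        have e1 : ‖u + v‖^2 = ‖u‖^2 + 2*⟪u,v⟫ + ‖v‖^2 := norm_add_sq_real u v
        have e2 : ‖u - v‖^2 = ‖u‖^2 - 2*⟪u,v⟫ + ‖v‖^2 := norm_sub_sq_real u v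
        have e3 : u - v = q' - s' := by rw [hu, hv]; abel
        have e4 : ‖u - v‖^2 ≤ 1 := by
          rw [e3]; nlinarith [norm_nonneg (q' - s')]
        nlinarith
      have : ‖u + v‖ ≤ 1 := by nlinarith [norm_nonneg (u+v)]
      rw [show ‖(1:ℝ)/2‖ = 1/2 by rw [Real.norm_eq_abs]; norm_num]
      linarith
    · have h1 : p' + (1/2 : ℝ) • (u + v) - q' = (1/2 : ℝ) • (v - u) := by
        rw [hu, hv]
        match_scalars <;> ring
      rw [h1, norm_smul, show ‖(1:ℝ)/2‖ = 1/2 by rw [Real.norm_eq_abs]; norm_num]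
      have : ‖v - u‖ = ‖q' - s'‖ := by
        rw [show v - u = -(q' - s') by rw [hu, hv]; abel, norm_neg]
      rw [this]; linarith
    · have h1 : p' + (1/2 : ℝ) • (u + v) - s' = (1/2 : ℝ) • (u - v) := by
        rw [hu, hv]
        match_scalars <;> ring
      rw [h1, norm_smul, show ‖(1:ℝ)/2‖ = 1/2 by rw [Real.norm_eq_abs]; norm_num]
      have : ‖u - v‖ = ‖q' - s'‖ := by rw [show u - v = q' - s' by rw [hu, hv]; abel]
      rw [this]; linarith
  rcases le_or_gt ⟪q - p, s - p⟫ 0 with h | hp'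
  · obtain ⟨z, h1, h2, h3⟩ := obtuse p q s hqs h
    exact ⟨z, h1.trans half_le_inv_sqrt3, h2.trans half_le_inv_sqrt3,
      h3.trans half_le_inv_sqrt3⟩
  rcases le_or_gt ⟪p - q, s - q⟫ 0 with h | hq'
  · obtain ⟨z, h1, h2, h3⟩ := obtuse q p s hps h
    exact ⟨z, h2.trans half_le_inv_sqrt3, h1.trans half_le_inv_sqrt3,
      h3.trans half_le_inv_sqrt3⟩
  rcases le_or_gt ⟪p - s, q - s⟫ 0 with h | hs'
  · obtain ⟨z, h1, h2, h3⟩ := obtuse s p q hpq h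
    exact ⟨z, h2.trans half_le_inv_sqrt3, h3.trans half_le_inv_sqrt3,
      h1.trans half_le_inv_sqrt3⟩
  -- acute case
  set u := q - p with hu
  set v := s - p with hv
  set A := ‖u‖^2 with hA
  set B := ‖v‖^2 with hB
  set C := ⟪u, v⟫ with hC
  have hApos : 0 < C := hp'
  have hAC : 0 < A - C := by
    have e : ⟪p - q, s - q⟫ = A - C := by
      rw [hA, hC, ← real_inner_self_eq_norm_sq]
      rw [show p - q = -u by rw [hu]; abel, show s - q = v - u by rw [hu, hv]; abel]
      rw [inner_neg_left, inner_sub_right]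
      ring
    rw [e] at hq'; exact hq'
  have hBC : 0 < B - C := by
    have e : ⟪p - s, q - s⟫ = B - C := by
      rw [hB, hC, ← real_inner_self_eq_norm_sq]
      rw [show p - s = -v by rw [hv]; abel, show q - s = u - v by rw [hu, hv]; abel]
      rw [inner_neg_left, inner_sub_right]
      have : ⟪v, u⟫ = ⟪u, v⟫ := real_inner_comm u v
      rw [this]; ring
    rw [e] at hs'; exact hs'
  have hA1 : A ≤ 1 := by
    have : ‖u‖ = ‖p - q‖ := by rw [show u = -(p-q) by rw [hu]; abel, norm_neg]
    rw [hA, this]; nlinarith [norm_nonneg (p - q)]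
  have hB1 : B ≤ 1 := by
    have : ‖v‖ = ‖p - s‖ := by rw [show v = -(p-s) by rw [hv]; abel, norm_neg]
    rw [hB, this]; nlinarith [norm_nonneg (p - s)]
  have hD1 : A + B - 2*C ≤ 1 := by
    have e : ‖u - v‖^2 = A + B - 2*C := by
      rw [hA, hB, hC, norm_sub_sq_real]; ring
    have e3 : u - v = q - s := by rw [hu, hv]; abel
    nlinarith [norm_nonneg (q - s), e, e3 ▸ e]
  have hG : 0 < A*B - C^2 := by nlinarith
  set G := A*B - C^2 with hGdef
  set α := B*(A-C)/(2*G) with hαdef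
  set β := A*(B-C)/(2*G) with hβdef
  have hGne : G ≠ 0 := ne_of_gt hG
  have hGne' : A*B - C^2 ≠ 0 := by rw [← hGdef]; exact hGne
  clear_value G
  clear_value A
  clear_value B
  clear_value C
  have e1 : α*A + β*C = A/2 := by rw [hαdef, hβdef, hGdef]; field_simp; linear_combination A * mul_inv_cancel₀ hGne'
  have e2 : α*C + β*B = B/2 := by rw [hαdef, hβdef, hGdef]; field_simp; linear_combination B * mul_inv_cancel₀ hGne'
  have expand : ∀ a b : ℝ, ‖a • u + b • v‖^2 = a^2*A + 2*a*b*C + b^2*B := by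
    intro a b
    have h := norm_add_sq_real (a • u) (b • v)
    rw [norm_smul, norm_smul, real_inner_smul_left, real_inner_smul_right] at h
    rw [h, Real.norm_eq_abs, Real.norm_eq_abs, mul_pow, mul_pow, sq_abs, sq_abs, hA, hB, hC]
    ring
  have hRbound : α^2*A + 2*α*β*C + β^2*B ≤ 1/3 := by
    have hsplit : α^2*A + 2*α*β*C + β^2*B = α*(α*A+β*C) + β*(α*C+β*B) := by ring
    rw [hsplit, e1, e2]
    have hval : α*(A/2) + β*(B/2) = A*B*(A+B-2*C)/(4*G) := by
      rw [hαdef, hβdef, hGdef]; field_simp; ring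
    rw [hval]
    rw [div_le_div_iff₀ (by positivity) (by norm_num : (0:ℝ) < 3)]
    have hk := key_ineq C (A-C) (B-C) hApos hAC hBC
      (by linarith) (by linarith) (by linarith)
    nlinarith [hk]
  refine ⟨p + α • u + β • v, ?_, ?_, ?_⟩ <;> apply norm_le_inv_sqrt3
  · have hz : p + α • u + β • v - p = α • u + β • v := by abel
    rw [hz, expand]
    linarith
  · have hz : p + α • u + β • v - q = (α - 1) • u + β • v := by
      rw [hu]; match_scalars <;> ring
    rw [hz, expand]
    have hid : (α-1)^2*A + 2*(α-1)*β*C + β^2*B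
        = α^2*A + 2*α*β*C + β^2*B - 2*(α*A+β*C) + A := by ring
    rw [hid, e1]
    linarith
  · have hz : p + α • u + β • v - s = α • u + (β - 1) • v := by
      rw [hv]; match_scalars <;> ring
    rw [hz, expand]
    have hid : α^2*A + 2*α*(β-1)*C + (β-1)^2*B
        = α^2*A + 2*α*β*C + β^2*B - 2*(α*C+β*B) + B := by ring
    rw [hid, e2]
    linarith

/-- Colorful Helly for finitely many equal disks in the plane. -/
lemma colorful (r : ℝ) (S₀ S₁ S₂ : Finset Pt)
    (h₀ : S₀.Nonempty) (h₁ : S₁.Nonempty) (h₂ : S₂.Nonempty)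
    (hrain : ∀ p ∈ S₀, ∀ q ∈ S₁, ∀ t ∈ S₂,
      (closedBall p r ∩ closedBall q r ∩ closedBall t r).Nonempty) :
    (∃ c, ∀ p ∈ S₀, c ∈ closedBall p r) ∨ (∃ c, ∀ q ∈ S₁, c ∈ closedBall q r) ∨
    (∃ c, ∀ t ∈ S₂, c ∈ closedBall t r) := by
  classical
  set X : Pt → Pt → Pt → Set Pt :=
    fun p q t => closedBall p r ∩ closedBall q r ∩ closedBall t r with hXdef
  have hXc : ∀ p q t, IsCompact (X p q t) := fun p q t =>
    (isCompact_closedBall t r).inter_left (isClosed_closedBall.inter isClosed_closedBall)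
  have hchoice : ∀ σ : Pt × Pt × Pt, ∃ zz : Pt,
      (X σ.1 σ.2.1 σ.2.2).Nonempty →
      zz ∈ X σ.1 σ.2.1 σ.2.2 ∧ ∀ w ∈ X σ.1 σ.2.1 σ.2.2, lexLe zz w := by
    intro σ
    by_cases h : (X σ.1 σ.2.1 σ.2.2).Nonempty
    · obtain ⟨zz, hzz, hmin⟩ := exists_lexmin (hXc _ _ _) h
      exact ⟨zz, fun _ => ⟨hzz, hmin⟩⟩
    · exact ⟨σ.1, fun h' => absurd h' h⟩
  choose z hz using hchoice
  set T : Finset (Pt × Pt × Pt) := S₀ ×ˢ S₁ ×ˢ S₂ with hTdef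
  have hTne : T.Nonempty := h₀.product (h₁.product h₂)
  obtain ⟨σs, hσT, hmax⟩ := T.exists_max_image
    (fun σ => toLex (z σ 0, z σ 1)) hTne
  obtain ⟨ps, qs, ts⟩ := σs
  rw [hTdef, Finset.mem_product] at hσT
  obtain ⟨hps, hσT2⟩ := hσT
  rw [Finset.mem_product] at hσT2
  obtain ⟨hqs, hts⟩ := hσT2
  have hXne : (X ps qs ts).Nonempty := hrain ps hps qs hqs ts hts
  obtain ⟨hx₀mem, hx₀min⟩ := hz (ps, qs, ts) hXne
  set x₀ := z (ps, qs, ts) with hx₀def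
  -- the three disks
  set A := closedBall ps r with hAdef
  set B := closedBall qs r with hBdef
  set C := closedBall ts r with hCdef
  have hxA : x₀ ∈ A := hx₀mem.1.1
  have hxB : x₀ ∈ B := hx₀mem.1.2
  have hxC : x₀ ∈ C := hx₀mem.2
  -- pairwise lexmins
  have hBCc : IsCompact (B ∩ C) := (isCompact_closedBall ts r).inter_left isClosed_closedBall
  have hACc : IsCompact (A ∩ C) := (isCompact_closedBall ts r).inter_left isClosed_closedBall
  have hABc : IsCompact (A ∩ B) := (isCompact_closedBall qs r).inter_left isClosed_closedBall
  obtain ⟨a, haBC, hamin⟩ := exists_lexmin hBCc ⟨x₀, hxB, hxC⟩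
  obtain ⟨b, hbAC, hbmin⟩ := exists_lexmin hACc ⟨x₀, hxA, hxC⟩
  obtain ⟨c, hcAB, hcmin⟩ := exists_lexmin hABc ⟨x₀, hxA, hxB⟩
  have hpin := pinning (convex_closedBall ps r) (convex_closedBall qs r)
    (convex_closedBall ts r) hxA hxB hxC
    (fun w hwA hwB hwC => hx₀min w ⟨⟨hwA, hwB⟩, hwC⟩)
    haBC.1 haBC.2 (fun w hwB hwC => hamin w ⟨hwB, hwC⟩)
    hbAC.1 hbAC.2 (fun w hwA hwC => hbmin w ⟨hwA, hwC⟩)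
    hcAB.1 hcAB.2 (fun w hwA hwB => hcmin w ⟨hwA, hwB⟩)
  -- generic step : given the pinned pair, the common point works for the missing family
  have step : ∀ σ' : Pt × Pt × Pt, σ'.1 ∈ S₀ → σ'.2.1 ∈ S₁ → σ'.2.2 ∈ S₂ →
      (∀ w ∈ X σ'.1 σ'.2.1 σ'.2.2, lexLe x₀ w) → x₀ ∈ X σ'.1 σ'.2.1 σ'.2.2 := by
    intro σ' h1 h2 h3 hlow
    have hne' : (X σ'.1 σ'.2.1 σ'.2.2).Nonempty := hrain _ h1 _ h2 _ h3
    obtain ⟨hz'mem, _⟩ := hz σ' hne'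
    have hup : lexLe (z σ') x₀ := by
      have := hmax σ' (by
        rw [hTdef, Finset.mem_product, Finset.mem_product]
        exact ⟨h1, h2, h3⟩)
      rw [Prod.Lex.le_iff] at this
      exact this
    have heq : z σ' = x₀ := lexLe_antisymm hup (hlow _ hz'mem)
    rw [← heq]
    exact hz'mem
  rcases hpin with hpa | hpb | hpc
  · -- a = x₀ : x₀ works for S₀
    refine Or.inl ⟨x₀, fun p hp => ?_⟩
    have := step (p, qs, ts) hp hqs hts (fun w hw => by
      rw [← hpa]
      exact hamin w ⟨hw.1.2, hw.2⟩)
    exact this.1.1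
  · refine Or.inr (Or.inl ⟨x₀, fun q hq => ?_⟩)
    have := step (ps, q, ts) hps hq hts (fun w hw => by
      rw [← hpb]
      exact hbmin w ⟨hw.1.1, hw.2⟩)
    exact this.1.2
  · refine Or.inr (Or.inr ⟨x₀, fun t ht => ?_⟩)
    have := step (ps, qs, t) hps hqs ht (fun w hw => by
      rw [← hpc]
      exact hcmin w ⟨hw.1.1, hw.1.2⟩)
    exact this.2

/-- If a compact nonempty set is in no ball of radius `r`, then already some finite
nonempty subset is in no ball of radius `r`. -/
lemma finite_reduction {P : Set Pt} (hP : IsCompact P) (hne : P.Nonempty) (r : ℝ)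
    (h : ∀ c : Pt, ¬ P ⊆ closedBall c r) :
    ∃ S : Finset Pt, S.Nonempty ∧ ↑S ⊆ P ∧ ∀ c : Pt, ∃ p ∈ S, c ∉ closedBall p r := by
  classical
  obtain ⟨p₀, hp₀⟩ := hne
  have hempty : closedBall p₀ r ∩ ⋂ p : P, closedBall (p : Pt) r = ∅ := by
    rw [eq_empty_iff_forall_notMem]
    intro c hc
    apply h c
    intro x hx
    have := mem_iInter.mp hc.2 ⟨x, hx⟩
    rw [mem_closedBall] at this ⊢
    rw [dist_comm]
    exact this
  obtain ⟨u, hu⟩ := (isCompact_closedBall p₀ r).elim_finite_subfamily_closed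
    (fun p : P => closedBall (p : Pt) r) (fun _ => isClosed_closedBall) hempty
  refine ⟨insert p₀ (u.image Subtype.val), ⟨p₀, Finset.mem_insert_self _ _⟩, ?_, ?_⟩
  · intro x hx
    rcases Finset.mem_insert.mp hx with h1 | h1
    · rw [h1]; exact hp₀
    · obtain ⟨⟨y, hy⟩, _, h3⟩ := Finset.mem_image.mp h1
      rw [← h3]; exact hy
  · intro c
    by_contra hcon
    push_neg at hcon
    have hc : c ∈ closedBall p₀ r ∩ ⋂ p ∈ u, closedBall (p : Pt) r := by
      constructor
      · exact hcon p₀ (Finset.mem_insert_self _ _)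
      · rw [mem_iInter₂]
        intro p hp
        exact hcon p (Finset.mem_insert_of_mem (Finset.mem_image_of_mem _ hp))
    rw [hu] at hc
    exact hc

/-- For `k ≥ 3` nonempty compact planar sets such that points from different
sets are at distance at most 1, one of the sets is contained in a closed ball
of radius `1/√3`. -/
theorem small_diameter_set
    (k : ℕ) (hk : 3 ≤ k)
    (P : Fin k → Set (EuclideanSpace ℝ (Fin 2)))
    (hPne : ∀ i, (P i).Nonempty)
    (hPcpt : ∀ i, IsCompact (P i))
    (hdist : ∀ i j, i ≠ j → ∀ p ∈ P i, ∀ q ∈ P j, ‖p - q‖ ≤ 1) :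
    ∃ i : Fin k, ∃ c : EuclideanSpace ℝ (Fin 2),
      P i ⊆ Metric.closedBall c (1 / Real.sqrt 3) := by
  by_contra hcon
  push_neg at hcon
  set r : ℝ := 1 / Real.sqrt 3 with hr
  -- indices 0, 1, 2
  have h0k : (0 : ℕ) < k := by omega
  have h1k : (1 : ℕ) < k := by omega
  have h2k : (2 : ℕ) < k := by omega
  set i₀ : Fin k := ⟨0, h0k⟩
  set i₁ : Fin k := ⟨1, h1k⟩
  set i₂ : Fin k := ⟨2, h2k⟩
  have hne01 : i₀ ≠ i₁ := by simp [i₀, i₁, Fin.ext_iff]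
  have hne02 : i₀ ≠ i₂ := by simp [i₀, i₂, Fin.ext_iff]
  have hne12 : i₁ ≠ i₂ := by simp [i₁, i₂, Fin.ext_iff]
  have hnot : ∀ i : Fin k, ∀ c : Pt, ¬ P i ⊆ closedBall c r := by
    intro i c hsub
    exact (hcon i c) hsub
  obtain ⟨S₀, hS₀ne, hS₀sub, hS₀⟩ := finite_reduction (hPcpt i₀) (hPne i₀) r (hnot i₀)
  obtain ⟨S₁, hS₁ne, hS₁sub, hS₁⟩ := finite_reduction (hPcpt i₁) (hPne i₁) r (hnot i₁)
  obtain ⟨S₂, hS₂ne, hS₂sub, hS₂⟩ := finite_reduction (hPcpt i₂) (hPne i₂) r (hnot i₂)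
  have hrain : ∀ p ∈ S₀, ∀ q ∈ S₁, ∀ t ∈ S₂,
      (closedBall p r ∩ closedBall q r ∩ closedBall t r).Nonempty := by
    intro p hp q hq t ht
    have hpq : ‖p - q‖ ≤ 1 := hdist i₀ i₁ hne01 p (hS₀sub hp) q (hS₁sub hq)
    have hpt : ‖p - t‖ ≤ 1 := hdist i₀ i₂ hne02 p (hS₀sub hp) t (hS₂sub ht)
    have hqt : ‖q - t‖ ≤ 1 := hdist i₁ i₂ hne12 q (hS₁sub hq) t (hS₂sub ht)
    obtain ⟨z, hz1, hz2, hz3⟩ := jung3 hpq hpt hqt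
    refine ⟨z, ⟨?_, ?_⟩, ?_⟩ <;> rw [mem_closedBall, dist_eq_norm]
    · exact hz1
    · exact hz2
    · exact hz3
  rcases colorful r S₀ S₁ S₂ hS₀ne hS₁ne hS₂ne hrain with ⟨c, hc⟩ | ⟨c, hc⟩ | ⟨c, hc⟩
  · obtain ⟨p, hp, hnp⟩ := hS₀ c
    exact hnp (hc p hp)
  · obtain ⟨p, hp, hnp⟩ := hS₁ c
    exact hnp (hc p hp)
  · obtain ⟨p, hp, hnp⟩ := hS₂ c
    exact hnp (hc p hp)
end SmallDiameter
end

section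
/- Let a, b ∈ ℝ² be points with ‖a − b‖ ≥ 2/√3. Then the intersection B(a,1) ∩ B(b,1) of the two closed Euclidean balls of radius 1 centred at a and b can be covered by three closed Euclidean balls each of diameter strictly less than 1, i.e., there exist centres c₁, c₂, c₃ ∈ ℝ² and radii r₁, r₂, r₃ < 1/2 with B(a,1) ∩ B(b,1) ⊆ B(c₁,r₁) ∪ B(c₂,r₂) ∪ B(c₃,r₃). -/
set_option maxHeartbeats 1000000

private lemma lens_top (A y s : ℝ) (hA : 0 ≤ A) (hs : s^2 = 3) (hs1 : 1.732 ≤ s)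
    (h : A^2 + (2*s/3)*A + 1/3 + y^2 ≤ 1) (hy : 1/4 ≤ y) (hy2 : y^2 ≤ 2/3) :
    A^2 + (y - 53/100)^2 ≤ (99/200)^2 := by
  nlinarith [sq_nonneg (A - 39/100), sq_nonneg (y - 1/4), mul_nonneg hA (sub_nonneg.2 hy),
    sq_nonneg (A - 2/5), mul_nonneg hA hA, sq_nonneg (y - 41/50)]

private lemma lens_arith (d x y : ℝ) (hd : 2 / Real.sqrt 3 ≤ d)
    (h1 : (x + d/2)^2 + y^2 ≤ 1) (h2 : (x - d/2)^2 + y^2 ≤ 1) :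
    x^2 + y^2 ≤ (99/200)^2 ∨ x^2 + (y - 53/100)^2 ≤ (99/200)^2 ∨
      x^2 + (y + 53/100)^2 ≤ (99/200)^2 := by
  set s := Real.sqrt 3 with hsdef
  have hs : s^2 = 3 := Real.sq_sqrt (by norm_num)
  have hs0 : 0 ≤ s := Real.sqrt_nonneg 3
  have hs1 : 1.732 ≤ s := by nlinarith
  have hs2 : s ≤ 1.7321 := by nlinarith
  have hd' : 2*s/3 ≤ d := by
    rw [div_le_iff₀ (by positivity)] at hd
    nlinarith
  have hdd : (2*s/3)^2 ≤ d^2 := by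
    have := mul_le_mul hd' hd' (by positivity) (le_trans (by positivity) hd')
    nlinarith
  have hy2 : y^2 ≤ 2/3 := by nlinarith [sq_nonneg x]
  have habs : (|x| + d/2)^2 + y^2 ≤ 1 := by
    rcases abs_cases x with ⟨h, _⟩ | ⟨h, _⟩
    · rw [h]; exact h1
    · rw [h]; nlinarith [h2]
  have habs' : |x|^2 + (2*s/3)*|x| + 1/3 + y^2 ≤ 1 := by
    nlinarith [abs_nonneg x, sq_abs x]
  rcases le_or_gt y (-(1/4)) with hy | hy
  · right; right
    have := lens_top |x| (-y) s (abs_nonneg x) hs hs1 (by rw [neg_sq]; exact habs')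
      (by linarith) (by rw [neg_sq]; exact hy2)
    have e : (-y - 53/100)^2 = (y + 53/100)^2 := by ring
    rw [sq_abs, e] at this
    exact this
  · rcases le_or_gt y (1/4) with hy' | hy'
    · left
      have hx1 : x ≤ 1 - d/2 := by nlinarith [sq_nonneg (x + d/2 - 1), sq_nonneg y]
      have hx2 : d/2 - 1 ≤ x := by nlinarith [sq_nonneg (x - d/2 + 1), sq_nonneg y]
      have hyy : y^2 ≤ 1/16 := by nlinarith
      nlinarith [mul_nonneg (sub_nonneg.2 hx1) (sub_nonneg.2 hx2), sq_nonneg x,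
        mul_nonneg (sub_nonneg.2 hd') (by nlinarith : (0:ℝ) ≤ 2 - d)]
    · right; left
      have := lens_top |x| y s (abs_nonneg x) hs hs1 habs' (le_of_lt hy') hy2
      rw [sq_abs] at this
      exact this

open Complex in
private lemma lens_complex (a b : ℂ) (hab : 2 / Real.sqrt 3 ≤ ‖a - b‖) :
    ∃ c₁ c₂ c₃ : ℂ, ∃ r₁ r₂ r₃ : ℝ,
      r₁ < 1 / 2 ∧ r₂ < 1 / 2 ∧ r₃ < 1 / 2 ∧
      Metric.closedBall a 1 ∩ Metric.closedBall b 1 ⊆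
        Metric.closedBall c₁ r₁ ∪ Metric.closedBall c₂ r₂ ∪ Metric.closedBall c₃ r₃ := by
  have hs3 : (0:ℝ) < 2 / Real.sqrt 3 := by positivity
  obtain ⟨d, hddef⟩ : ∃ d : ℝ, d = ‖a - b‖ := ⟨_, rfl⟩
  rw [← hddef] at hab
  have hd0 : 0 < d := lt_of_lt_of_le hs3 hab
  have hdne : (d : ℂ) ≠ 0 := by exact_mod_cast ne_of_gt hd0
  obtain ⟨u, hud, hcu⟩ : ∃ u : ℂ, (d:ℂ) * u = b - a ∧ u * (starRingEnd ℂ) u = 1 := by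
    refine ⟨(b - a) / (d:ℂ), by field_simp, ?_⟩
    rw [Complex.mul_conj]
    have : Complex.normSq ((b - a) / (d:ℂ)) = 1 := by
      rw [Complex.normSq_div, Complex.normSq_eq_norm_sq,
        show ‖b - a‖ = d by rw [hddef, ← norm_neg]; ring_nf,
        Complex.normSq_ofReal]
      field_simp
    rw [this]; norm_num
  refine ⟨(a + b)/2, (a + b)/2 + (53/100) * (u * Complex.I),
    (a + b)/2 - (53/100) * (u * Complex.I),
    99/200, 99/200, 99/200, by norm_num, by norm_num, by norm_num, ?_⟩
  rintro z ⟨hza, hzb⟩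
  rw [Metric.mem_closedBall, dist_eq_norm] at hza hzb
  obtain ⟨w, hwdef⟩ : ∃ w : ℂ, w = (z - (a + b)/2) * (starRingEnd ℂ) u := ⟨_, rfl⟩
  obtain ⟨x, hx⟩ : ∃ x : ℝ, x = w.re := ⟨_, rfl⟩
  obtain ⟨y, hy⟩ : ∃ y : ℝ, y = w.im := ⟨_, rfl⟩
  have hnu : Complex.normSq u = 1 := by
    have h := hcu
    rw [Complex.mul_conj] at h
    exact_mod_cast h
  have key : ∀ c : ℂ, ‖z - c‖^2 = Complex.normSq ((z - c) * (starRingEnd ℂ) u) := by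
    intro c
    rw [Complex.normSq_mul, Complex.normSq_conj, hnu, mul_one, ← Complex.sq_norm]
  have ha' : (z - a) * (starRingEnd ℂ) u = w + ((d/2 : ℝ) : ℂ) := by
    rw [hwdef]; push_cast
    linear_combination (-(starRingEnd ℂ) u / 2) * hud + ((d:ℂ)/2) * hcu
  have hb' : (z - b) * (starRingEnd ℂ) u = w - ((d/2 : ℝ) : ℂ) := by
    rw [hwdef]; push_cast
    linear_combination ((starRingEnd ℂ) u / 2) * hud + (-(d:ℂ)/2) * hcu
  have hc2' : (z - ((a + b)/2 + (53/100) * (u * Complex.I))) * (starRingEnd ℂ) u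
      = w - (53/100) * Complex.I := by
    rw [hwdef]
    linear_combination (-(53:ℂ)/100 * Complex.I) * hcu
  have hc3' : (z - ((a + b)/2 - (53/100) * (u * Complex.I))) * (starRingEnd ℂ) u
      = w + (53/100) * Complex.I := by
    rw [hwdef]
    linear_combination ((53:ℂ)/100 * Complex.I) * hcu
  have e1 : ‖z - a‖^2 = (x + d/2)^2 + y^2 := by
    rw [key a, ha', Complex.normSq_apply, hx, hy]; simp; ring
  have e2 : ‖z - b‖^2 = (x - d/2)^2 + y^2 := by
    rw [key b, hb', Complex.normSq_apply, hx, hy]; simp; ring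
  have e3 : ‖z - (a + b)/2‖^2 = x^2 + y^2 := by
    rw [key ((a+b)/2), ← hwdef, Complex.normSq_apply, hx, hy]; ring
  have e4 : ‖z - ((a + b)/2 + (53/100) * (u * Complex.I))‖^2 = x^2 + (y - 53/100)^2 := by
    rw [key _, hc2', Complex.normSq_apply, hx, hy]; simp; ring
  have e5 : ‖z - ((a + b)/2 - (53/100) * (u * Complex.I))‖^2 = x^2 + (y + 53/100)^2 := by
    rw [key _, hc3', Complex.normSq_apply, hx, hy]; simp; ring
  have final : ∀ c : ℂ, ‖z - c‖^2 ≤ (99/200)^2 → z ∈ Metric.closedBall c (99/200 : ℝ) := by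
    intro c h
    rw [Metric.mem_closedBall, dist_eq_norm]
    nlinarith [norm_nonneg (z - c)]
  have h1 : (x + d/2)^2 + y^2 ≤ 1 := by nlinarith [e1, norm_nonneg (z - a)]
  have h2 : (x - d/2)^2 + y^2 ≤ 1 := by nlinarith [e2, norm_nonneg (z - b)]
  rcases lens_arith d x y hab h1 h2 with h | h | h
  · exact Or.inl (Or.inl (final _ (by rw [e3]; exact h)))
  · exact Or.inl (Or.inr (final _ (by rw [e4]; exact h)))
  · exact Or.inr (final _ (by rw [e5]; exact h))

/-- The intersection of two unit balls whose centres are at distance at least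
`2/√3` can be covered by three closed balls, each of diameter strictly less
than 1. -/
theorem lens_covering
    (a b : EuclideanSpace ℝ (Fin 2))
    (hab : 2 / Real.sqrt 3 ≤ ‖a - b‖) :
    ∃ c₁ c₂ c₃ : EuclideanSpace ℝ (Fin 2), ∃ r₁ r₂ r₃ : ℝ,
      r₁ < 1 / 2 ∧ r₂ < 1 / 2 ∧ r₃ < 1 / 2 ∧
      Metric.closedBall a 1 ∩ Metric.closedBall b 1 ⊆
        Metric.closedBall c₁ r₁ ∪ Metric.closedBall c₂ r₂ ∪ Metric.closedBall c₃ r₃ := by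
  let e : ℂ ≃ₗᵢ[ℝ] EuclideanSpace ℝ (Fin 2) :=
    Complex.isometryOfOrthonormal (EuclideanSpace.basisFun (Fin 2) ℝ)
  have hab' : 2 / Real.sqrt 3 ≤ ‖e.symm a - e.symm b‖ := by
    rw [← map_sub, e.symm.norm_map]; exact hab
  obtain ⟨c₁, c₂, c₃, r₁, r₂, r₃, hr₁, hr₂, hr₃, hcov⟩ := lens_complex (e.symm a) (e.symm b) hab'
  refine ⟨e c₁, e c₂, e c₃, r₁, r₂, r₃, hr₁, hr₂, hr₃, ?_⟩
  rintro z ⟨hza, hzb⟩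
  have hmem : e.symm z ∈ Metric.closedBall (e.symm a) 1 ∩ Metric.closedBall (e.symm b) 1 := by
    constructor <;> rw [Metric.mem_closedBall, e.symm.dist_map]
    · exact hza
    · exact hzb
  have key : ∀ c : ℂ, e.symm z ∈ Metric.closedBall c r₁ → z ∈ Metric.closedBall (e c) r₁ := by
    intro c h
    rw [Metric.mem_closedBall] at h ⊢
    rwa [← e.dist_map (e.symm z) c, e.apply_symm_apply] at h
  rcases hcov hmem with (h | h) | h
  · exact Or.inl (Or.inl (key c₁ h))
  · exact Or.inl (Or.inr (by
      rw [Metric.mem_closedBall] at h ⊢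
      rwa [← e.dist_map (e.symm z) c₂, e.apply_symm_apply] at h))
  · exact Or.inr (by
      rw [Metric.mem_closedBall] at h ⊢
      rwa [← e.dist_map (e.symm z) c₃, e.apply_symm_apply] at h)
end
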